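/- arXiv:1711.02428 — 4 statements merged into one kernel-verified Lean document; each statement's English description precedes it below -/
import Mathlib

section
/- (Corollary 3.5 (iv), quantitative part) If the metric graph G has finite total volume, mes(G) = Σ_{e ∈ E} |e| < ∞, then α(G) ≥ 1/mes(G) and α_ess(G) = +∞. -/
open scoped Classical ENNReal
open MeasureTheory

noncomputable section

/-- A real function on `[0, L]` which is continuous and piecewise continuously
differentiable: there is a finite partition `0 = x 0 < x 1 < ... < x n = L` such that
on each closed piece the function has a continuous derivative. -/
def PiecewiseC1 (f : ℝ → ℝ) (L : ℝ) : Prop :=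
  ContinuousOn f (Set.Icc 0 L) ∧
  ∃ (n : ℕ) (x : Fin (n + 1) → ℝ), x 0 = 0 ∧ x (Fin.last n) = L ∧ StrictMono x ∧
    ∀ i : Fin n, ∃ g : ℝ → ℝ,
      ContinuousOn g (Set.Icc (x i.castSucc) (x i.succ)) ∧
      ∀ t ∈ Set.Icc (x i.castSucc) (x i.succ),
        HasDerivWithinAt f (g t) (Set.Icc (x i.castSucc) (x i.succ)) t

/-- The underlying (unoriented) simple graph of a set of edges `E` with endpoint
map `ends : E → V × V`. -/
def graphOf {V E : Type} (ends : E → V × V) : SimpleGraph V :=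
  SimpleGraph.fromRel fun u v => ∃ e, ends e = (u, v)

/-- A metric graph: a connected, locally finite, simple combinatorial graph with
countably infinite vertex and edge sets, each edge having a finite positive length.
Each edge carries an (auxiliary) orientation given by `ends`. -/
structure MetricGraph : Type 1 where
  V : Type
  E : Type
  countV : Countable V
  infV : Infinite V
  countE : Countable E
  infE : Infinite E
  ends : E → V × V
  len : E → ℝ
  len_pos : ∀ e, 0 < len e
  no_loops : ∀ e, (ends e).1 ≠ (ends e).2
  no_multi : Function.Injective fun e => Sym2.mk (ends e)
  locfin : ∀ v, {e | (ends e).1 = v ∨ (ends e).2 = v}.Finite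
  conn : (graphOf ends).Connected

namespace MetricGraph

/-- The underlying simple graph. -/
def graph (Γ : MetricGraph) : SimpleGraph Γ.V := graphOf Γ.ends

/-- The star of a vertex: the set of edges incident to it. -/
def star (Γ : MetricGraph) (v : Γ.V) : Set Γ.E :=
  {e | (Γ.ends e).1 = v ∨ (Γ.ends e).2 = v}

/-- Combinatorial degree of a vertex. -/
def degree (Γ : MetricGraph) (v : Γ.V) : ℕ := (Γ.locfin v).toFinset.card

/-- The vertices of a (finite) subgraph given by a finite set of edges. -/
def vertsOf (Γ : MetricGraph) (F : Finset Γ.E) : Finset Γ.V :=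
  F.image (fun e => (Γ.ends e).1) ∪ F.image fun e => (Γ.ends e).2

/-- The degree of a vertex inside the subgraph given by the edge set `F`. -/
def degIn (Γ : MetricGraph) (F : Finset Γ.E) (v : Γ.V) : ℕ :=
  (F.filter fun e => (Γ.ends e).1 = v ∨ (Γ.ends e).2 = v).card

/-- Connectedness of the subgraph spanned by the edge set `F`. -/
def SubConn (Γ : MetricGraph) (F : Finset Γ.E) : Prop :=
  ((SimpleGraph.fromRel fun u v => ∃ e ∈ F, Γ.ends e = (u, v)).induce
    (↑(Γ.vertsOf F) : Set Γ.V)).Connected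

/-- A finite connected subgraph (with at least one edge), given by its edge set. -/
def IsFinSubgraph (Γ : MetricGraph) (F : Finset Γ.E) : Prop :=
  F.Nonempty ∧ Γ.SubConn F

/-- The boundary of a finite subgraph with respect to `Γ`: the vertices whose degree
in the subgraph is strictly smaller than the degree in `Γ`. -/
def bdry (Γ : MetricGraph) (F : Finset Γ.E) : Finset Γ.V :=
  (Γ.vertsOf F).filter fun v => Γ.degIn F v < Γ.degree v

/-- `deg (∂_G G̃)`. -/
def degBdry (Γ : MetricGraph) (F : Finset Γ.E) : ℝ :=
  ∑ v ∈ Γ.bdry F, (Γ.degIn F v : ℝ)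

/-- The total length (Lebesgue measure) of a finite subgraph. -/
def mes (Γ : MetricGraph) (F : Finset Γ.E) : ℝ := ∑ e ∈ F, Γ.len e

/-- The isoperimetric (Cheeger) constant of a metric graph. -/
def alpha (Γ : MetricGraph) : ℝ :=
  sInf {r : ℝ | ∃ F : Finset Γ.E, Γ.IsFinSubgraph F ∧ r = Γ.degBdry F / Γ.mes F}

/-- The isoperimetric constant at infinity, as an element of `[0,∞]`. -/
def alphaEssEnn (Γ : MetricGraph) : ℝ≥0∞ :=
  ⨆ W : Finset Γ.E, ⨅ (F : Finset Γ.E) (_ : Γ.IsFinSubgraph F ∧ Disjoint F W),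
    ENNReal.ofReal (Γ.degBdry F / Γ.mes F)

/-- The vertex weight `m(v) = Σ_{e ∈ E_v} |e|`. -/
def mweight (Γ : MetricGraph) (v : Γ.V) : ℝ :=
  ∑ e ∈ (Γ.locfin v).toFinset, Γ.len e

/-- The set of boundary edges of a vertex set: edges with exactly one endpoint in `X`. -/
def Eb (Γ : MetricGraph) (X : Set Γ.V) : Set Γ.E :=
  {e | Xor' ((Γ.ends e).1 ∈ X) ((Γ.ends e).2 ∈ X)}

/-- The discrete isoperimetric constant of a vertex set `U`. -/
def alphaD (Γ : MetricGraph) (U : Set Γ.V) : ℝ :=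
  sInf {r : ℝ | ∃ X : Finset Γ.V, ↑X ⊆ U ∧ X.Nonempty ∧
    r = ((Γ.Eb ↑X).ncard : ℝ) / ∑ v ∈ X, Γ.mweight v}

/-- The discrete isoperimetric constant at infinity, as an element of `[0,∞]`. -/
def alphaDEssEnn (Γ : MetricGraph) : ℝ≥0∞ :=
  ⨆ X : Finset Γ.V, ENNReal.ofReal (Γ.alphaD (↑X : Set Γ.V)ᶜ)

/-- The combinatorial isoperimetric constant. -/
def alphaComb (Γ : MetricGraph) : ℝ :=
  sInf {r : ℝ | ∃ X : Finset Γ.V, X.Nonempty ∧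
    r = ((Γ.Eb ↑X).ncard : ℝ) / ∑ v ∈ X, (Γ.degree v : ℝ)}

/-- `ℓ*(G) = sup of edge lengths`. -/
def ellSup (Γ : MetricGraph) : ℝ := sSup (Set.range Γ.len)

/-- `ℓ_*(G) = inf of edge lengths`. -/
def ellInf (Γ : MetricGraph) : ℝ := sInf (Set.range Γ.len)

/-- `ℓ*(G)` as an element of `[0,∞]`. -/
def ellSupEnn (Γ : MetricGraph) : ℝ≥0∞ := ⨆ e : Γ.E, ENNReal.ofReal (Γ.len e)

/-- `ℓ*_ess(G) = inf_F sup_{e ∉ F} |e|` as an element of `[0,∞]`. -/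
def ellSupEssEnn (Γ : MetricGraph) : ℝ≥0∞ :=
  ⨅ W : Finset Γ.E, ⨆ e : {e : Γ.E // e ∉ W}, ENNReal.ofReal (Γ.len (e : Γ.E))

/-- Outgoing edges at a vertex (for the fixed orientation). -/
def plusE (Γ : MetricGraph) (v : Γ.V) : Set Γ.E := {e | (Γ.ends e).1 = v}

/-- Incoming edges at a vertex (for the fixed orientation). -/
def minusE (Γ : MetricGraph) (v : Γ.V) : Set Γ.E := {e | (Γ.ends e).2 = v}

/-- The curvature `K(v) = ((#E_v⁺ − #E_v⁻)/#E_v⁺) · inf_{e ∈ E_v⁺} 1/|e|`. -/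
def Kcurv (Γ : MetricGraph) (v : Γ.V) : ℝ :=
  (((Γ.plusE v).ncard : ℝ) - ((Γ.minusE v).ncard : ℝ)) / ((Γ.plusE v).ncard : ℝ) *
    sInf ((fun e => 1 / Γ.len e) '' Γ.plusE v)

/-- The combinatorial curvature `K_comb(v) = 1 − #E_v⁻/#E_v⁺`. -/
def Kcomb (Γ : MetricGraph) (v : Γ.V) : ℝ :=
  1 - ((Γ.minusE v).ncard : ℝ) / ((Γ.plusE v).ncard : ℝ)

/-- `liminf_{v ∈ V} K(v) = sup over finite W of inf_{v ∉ W} K(v)`, in `[0,∞]`. -/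
def KcurvEssEnn (Γ : MetricGraph) : ℝ≥0∞ :=
  ⨆ W : Finset Γ.V, ⨅ v : {v : Γ.V // v ∉ W}, ENNReal.ofReal (Γ.Kcurv (v : Γ.V))

/-- `liminf_{v ∈ V} K_comb(v) = sup over finite W of inf_{v ∉ W} K_comb(v)`. -/
def KcombLiminf (Γ : MetricGraph) : ℝ :=
  sSup (Set.range fun W : Finset Γ.V => sInf (Γ.Kcomb '' (↑W : Set Γ.V)ᶜ))

/-- The value of an edgewise function at an endpoint of an edge. -/
def endVal (Γ : MetricGraph) (f : Γ.E → ℝ → ℝ) (e : Γ.E) (v : Γ.V) : ℝ :=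
  if (Γ.ends e).1 = v then f e 0 else f e (Γ.len e)

/-- A test function on the metric graph `Γ`: a family of continuous, piecewise `C¹`
functions on the edges, matching at the vertices, vanishing on all but finitely
many edges. -/
structure TestFun (Γ : MetricGraph) where
  f : Γ.E → ℝ → ℝ
  piecewise : ∀ e, PiecewiseC1 (f e) (Γ.len e)
  vertexCont : ∀ e e' : Γ.E, ∀ v : Γ.V, e ∈ Γ.star v → e' ∈ Γ.star v →
    Γ.endVal f e v = Γ.endVal f e' v
  finSupp : {e : Γ.E | ∃ x ∈ Set.Icc 0 (Γ.len e), f e x ≠ 0}.Finite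

/-- `‖f‖² = Σ_e ∫₀^{|e|} f_e(x)² dx`. -/
def TestFun.normSq {Γ : MetricGraph} (φ : TestFun Γ) : ℝ :=
  ∑ᶠ e : Γ.E, ∫ x in (0:ℝ)..Γ.len e, (φ.f e x) ^ 2

/-- `‖f′‖² = Σ_e ∫₀^{|e|} f_e′(x)² dx`. -/
def TestFun.energySq {Γ : MetricGraph} (φ : TestFun Γ) : ℝ :=
  ∑ᶠ e : Γ.E, ∫ x in (0:ℝ)..Γ.len e, (deriv (φ.f e) x) ^ 2

/-- A test function is nonzero if it does not vanish identically on the graph. -/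
def TestFun.Nonzero {Γ : MetricGraph} (φ : TestFun Γ) : Prop :=
  ∃ e : Γ.E, ∃ x ∈ Set.Icc 0 (Γ.len e), φ.f e x ≠ 0

/-- The bottom of the spectrum of the Kirchhoff Laplacian, via the variational
(Rayleigh quotient) characterization. -/
def lambda0 (Γ : MetricGraph) : ℝ :=
  sInf {r : ℝ | ∃ φ : TestFun Γ, φ.Nonzero ∧ r = φ.energySq / φ.normSq}

end MetricGraph

/-- A weighted graph `(V, m, b)`: a connected, locally finite, simple combinatorial
graph with countably infinite vertex and edge sets, an edge weight `b` and a vertex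
weight `m`. -/
structure WeightedGraph : Type 1 where
  V : Type
  E : Type
  countV : Countable V
  infV : Infinite V
  countE : Countable E
  infE : Infinite E
  ends : E → V × V
  no_loops : ∀ e, (ends e).1 ≠ (ends e).2
  no_multi : Function.Injective fun e => Sym2.mk (ends e)
  locfin : ∀ v, {e | (ends e).1 = v ∨ (ends e).2 = v}.Finite
  conn : (graphOf ends).Connected
  b : E → ℝ
  b_pos : ∀ e, 0 < b e
  m : V → ℝ
  m_pos : ∀ v, 0 < m v

namespace WeightedGraph

/-- An edge weight `d` is intrinsic if `Σ_{e ∈ E_v} d(e)² b(e) ≤ m(v)` for all `v`. -/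
def Intrinsic (Γ : WeightedGraph) (d : Γ.E → ℝ) : Prop :=
  ∀ v, ∑ e ∈ (Γ.locfin v).toFinset, d e ^ 2 * Γ.b e ≤ Γ.m v

/-- The boundary edges of a vertex set: edges with exactly one endpoint in `X`. -/
def Eb (Γ : WeightedGraph) (X : Set Γ.V) : Set Γ.E :=
  {e | Xor' ((Γ.ends e).1 ∈ X) ((Γ.ends e).2 ∈ X)}

/-- The discrete isoperimetric constant `α_d(U)` with respect to the weight `d`. -/
def alphaD (Γ : WeightedGraph) (d : Γ.E → ℝ) (U : Set Γ.V) : ℝ :=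
  sInf {r : ℝ | ∃ X : Finset Γ.V, ↑X ⊆ U ∧ X.Nonempty ∧
    r = (∑ᶠ e ∈ Γ.Eb ↑X, d e * Γ.b e) / ∑ v ∈ X, Γ.m v}

/-- The discrete isoperimetric constant at infinity, in `[0,∞]`. -/
def alphaDEssEnn (Γ : WeightedGraph) (d : Γ.E → ℝ) : ℝ≥0∞ :=
  ⨆ X : Finset Γ.V, ENNReal.ofReal (Γ.alphaD d (↑X : Set Γ.V)ᶜ)

/-- The energy form `Q(u) = Σ_e b(e) (u(e_i) − u(e_0))²`. -/
def Q (Γ : WeightedGraph) (u : Γ.V → ℝ) : ℝ :=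
  ∑ᶠ e : Γ.E, Γ.b e * (u (Γ.ends e).2 - u (Γ.ends e).1) ^ 2

/-- The squared norm `Σ_v m(v) u(v)²`. -/
def normSqD (Γ : WeightedGraph) (u : Γ.V → ℝ) : ℝ :=
  ∑ᶠ v : Γ.V, Γ.m v * u v ^ 2

/-- The bottom of the spectrum of the Friedrichs extension of the weighted Laplacian,
via the variational characterization over finitely supported functions. -/
def lambda0 (Γ : WeightedGraph) : ℝ :=
  sInf {r : ℝ | ∃ u : Γ.V → ℝ, (Function.support u).Finite ∧ u ≠ 0 ∧
    r = Γ.Q u / Γ.normSqD u}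

/-- The bottom of the essential spectrum of the Friedrichs extension, via Glazman's
decomposition principle, in `[0,∞]`. -/
def lambda0EssEnn (Γ : WeightedGraph) : ℝ≥0∞ :=
  ⨆ X : Finset Γ.V, ⨅ (u : Γ.V → ℝ)
    (_ : (Function.support u).Finite ∧ u ≠ 0 ∧ ∀ v ∈ X, u v = 0),
      ENNReal.ofReal (Γ.Q u / Γ.normSqD u)

end WeightedGraph

end

section AuxLemmas

open MetricGraph

lemma aux_mem_vertsOf (Γ : MetricGraph) (F : Finset Γ.E) (e : Γ.E) (he : e ∈ F) :
    (Γ.ends e).1 ∈ Γ.vertsOf F ∧ (Γ.ends e).2 ∈ Γ.vertsOf F :=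
  ⟨Finset.mem_union_left _ (Finset.mem_image.mpr ⟨e, he, rfl⟩),
   Finset.mem_union_right _ (Finset.mem_image.mpr ⟨e, he, rfl⟩)⟩

lemma aux_one_le_degIn (Γ : MetricGraph) (F : Finset Γ.E) (v : Γ.V)
    (hv : v ∈ Γ.vertsOf F) : 1 ≤ Γ.degIn F v := by
  rw [MetricGraph.vertsOf, Finset.mem_union, Finset.mem_image, Finset.mem_image] at hv
  rcases hv with ⟨e, he, hev⟩ | ⟨e, he, hev⟩ <;>
    exact Finset.card_pos.mpr ⟨e, Finset.mem_filter.mpr ⟨he, by tauto⟩⟩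

lemma aux_bdry_exists (Γ : MetricGraph) (F : Finset Γ.E) (hF : F.Nonempty) :
    ∃ v ∈ Γ.vertsOf F, Γ.degIn F v < Γ.degree v := by
  by_contra h
  push_neg at h
  have hclosed : ∀ v ∈ Γ.vertsOf F, ∀ e, ((Γ.ends e).1 = v ∨ (Γ.ends e).2 = v) → e ∈ F := by
    intro v hv e hev
    have h1 : Γ.degree v ≤ Γ.degIn F v := h v hv
    have hsub : (F.filter fun e => (Γ.ends e).1 = v ∨ (Γ.ends e).2 = v) ⊆
        (Γ.locfin v).toFinset := by
      intro x hx
      rw [Finset.mem_filter] at hx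
      rw [Set.Finite.mem_toFinset]
      exact hx.2
    have heq := Finset.eq_of_subset_of_card_le hsub h1
    have he' : e ∈ (Γ.locfin v).toFinset := (Set.Finite.mem_toFinset _).mpr hev
    rw [← heq, Finset.mem_filter] at he'
    exact he'.1
  obtain ⟨e0, he0⟩ := hF
  haveI := Γ.infV
  obtain ⟨u, hu⟩ := Infinite.exists_notMem_finset (Γ.vertsOf F)
  have hv0 : (Γ.ends e0).1 ∈ Γ.vertsOf F := (aux_mem_vertsOf Γ F e0 he0).1
  obtain ⟨p⟩ := Γ.conn.preconnected (Γ.ends e0).1 u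
  obtain ⟨d, _, hd1, hd2⟩ := p.exists_boundary_dart (↑(Γ.vertsOf F) : Set Γ.V)
    (by simpa using hv0) (by simpa using hu)
  have hd1' : d.toProd.1 ∈ Γ.vertsOf F := by simpa using hd1
  have hadj : (SimpleGraph.fromRel fun u v => ∃ e, Γ.ends e = (u, v)).Adj
      d.toProd.1 d.toProd.2 := d.adj
  rw [SimpleGraph.fromRel_adj] at hadj
  obtain ⟨hne, ⟨e, he⟩ | ⟨e, he⟩⟩ := hadj
  · have heF : e ∈ F := hclosed _ hd1' e (Or.inl (by rw [he]))
    have : d.toProd.2 ∈ Γ.vertsOf F := by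
      have := (aux_mem_vertsOf Γ F e heF).2
      rwa [he] at this
    exact hd2 (by simpa using this)
  · have heF : e ∈ F := hclosed _ hd1' e (Or.inr (by rw [he]))
    have : d.toProd.2 ∈ Γ.vertsOf F := by
      have := (aux_mem_vertsOf Γ F e heF).1
      rwa [he] at this
    exact hd2 (by simpa using this)

lemma aux_one_le_degBdry (Γ : MetricGraph) (F : Finset Γ.E) (hF : F.Nonempty) :
    1 ≤ Γ.degBdry F := by
  obtain ⟨v, hv, hlt⟩ := aux_bdry_exists Γ F hF
  have hvb : v ∈ Γ.bdry F := Finset.mem_filter.mpr ⟨hv, hlt⟩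
  calc (1:ℝ) ≤ (Γ.degIn F v : ℝ) := by exact_mod_cast aux_one_le_degIn Γ F v hv
    _ ≤ ∑ w ∈ Γ.bdry F, (Γ.degIn F w : ℝ) :=
      Finset.single_le_sum (f := fun w => (Γ.degIn F w : ℝ)) (fun w _ => by positivity) hvb

lemma aux_mes_pos (Γ : MetricGraph) (F : Finset Γ.E) (hF : F.Nonempty) : 0 < Γ.mes F :=
  Finset.sum_pos (fun e _ => Γ.len_pos e) hF

lemma aux_exists_finsub (Γ : MetricGraph) : ∃ F : Finset Γ.E, Γ.IsFinSubgraph F := by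
  haveI := Γ.infE
  obtain ⟨e⟩ : Nonempty Γ.E := inferInstance
  refine ⟨{e}, Finset.singleton_nonempty e, ?_⟩
  rw [MetricGraph.SubConn]
  have hverts : ∀ w : Γ.V, w ∈ Γ.vertsOf {e} ↔ w = (Γ.ends e).1 ∨ w = (Γ.ends e).2 := by
    intro w
    simp [MetricGraph.vertsOf, eq_comm]
  have ha : (Γ.ends e).1 ∈ (↑(Γ.vertsOf ({e} : Finset Γ.E)) : Set Γ.V) := by
    simp [hverts]
  have key : ∀ z : (↑(Γ.vertsOf ({e} : Finset Γ.E)) : Set Γ.V),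
      ((SimpleGraph.fromRel fun u v => ∃ e' ∈ ({e} : Finset Γ.E), Γ.ends e' = (u, v)).induce
        (↑(Γ.vertsOf ({e} : Finset Γ.E)) : Set Γ.V)).Reachable z ⟨(Γ.ends e).1, ha⟩ := by
    rintro ⟨z, hz⟩
    rcases (hverts z).mp (by simpa using hz) with h | h
    · subst h
      rfl
    · subst h
      apply SimpleGraph.Adj.reachable
      show (SimpleGraph.fromRel fun u v => ∃ e' ∈ ({e} : Finset Γ.E), Γ.ends e' = (u, v)).Adj
        (Γ.ends e).2 (Γ.ends e).1
      rw [SimpleGraph.fromRel_adj]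
      exact ⟨(Γ.no_loops e).symm, Or.inr ⟨e, Finset.mem_singleton_self e, rfl⟩⟩
  haveI : Nonempty (↑(Γ.vertsOf ({e} : Finset Γ.E)) : Set Γ.V) := ⟨⟨(Γ.ends e).1, ha⟩⟩
  exact ⟨fun u v => (key u).trans (key v).symm⟩

end AuxLemmas

/-- **Corollary 3.5 (iv), quantitative part.** If the metric graph has finite total
volume `mes(G) = Σ_{e ∈ E} |e| < ∞`, then `α(G) ≥ 1/mes(G)` and `α_ess(G) = +∞`. -/
theorem finite_volume_alpha_bounds (Γ : MetricGraph) (hfin : Summable Γ.len) :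
    1 / (∑' e : Γ.E, Γ.len e) ≤ Γ.alpha ∧ Γ.alphaEssEnn = ⊤ := by
  set M := ∑' e : Γ.E, Γ.len e with hM
  have hmes_le : ∀ F : Finset Γ.E, Γ.mes F ≤ M := fun F =>
    Summable.sum_le_tsum F (fun e _ => (Γ.len_pos e).le) hfin
  constructor
  · rw [MetricGraph.alpha]
    apply le_csInf
    · obtain ⟨F, hF⟩ := aux_exists_finsub Γ
      exact ⟨_, F, hF, rfl⟩
    · rintro r ⟨F, hF, rfl⟩
      have h1 := aux_one_le_degBdry Γ F hF.1
      have h2 := aux_mes_pos Γ F hF.1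
      exact div_le_div₀ (le_trans zero_le_one h1) h1 h2 (hmes_le F)
  · apply ENNReal.eq_top_of_forall_nnreal_le
    intro r
    have hε : (0:ℝ) < 1 / ((r:ℝ) + 1) := by positivity
    obtain ⟨W, hW⟩ := ((tendsto_order.1 (tendsto_tsum_compl_atTop_zero Γ.len)).2 _ hε).exists
    rw [MetricGraph.alphaEssEnn]
    refine le_trans ?_ (le_iSup _ W)
    refine le_iInf fun F => le_iInf fun hF => ?_
    obtain ⟨⟨hFne, _⟩, hdisj⟩ := hF
    have h1 := aux_one_le_degBdry Γ F hFne
    have h2 := aux_mes_pos Γ F hFne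
    have hmesF : Γ.mes F ≤ ∑' (a : {x : Γ.E // x ∉ W}), Γ.len a := by
      have heq : Γ.mes F = ∑ x ∈ F.subtype (fun e => e ∉ W), Γ.len x := by
        rw [Finset.sum_subtype_eq_sum_filter, MetricGraph.mes]
        congr 1
        exact (Finset.filter_true_of_mem fun x hx =>
          Finset.disjoint_left.mp hdisj hx).symm
      rw [heq]
      exact Summable.sum_le_tsum _ (fun i _ => (Γ.len_pos i).le) (hfin.subtype _)
    have hlt : Γ.mes F < 1 / ((r:ℝ) + 1) := lt_of_le_of_lt hmesF hW
    have hr1 : (r:ℝ) + 1 ≤ 1 / Γ.mes F := by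
      rw [le_div_iff₀ h2]
      nlinarith [(lt_div_iff₀ (by positivity : (0:ℝ) < (r:ℝ) + 1)).mp
        (by linarith [hlt] : Γ.mes F < 1 / ((r:ℝ) + 1))]
    have hfinal : (r : ℝ) ≤ Γ.degBdry F / Γ.mes F := by
      have : 1 / Γ.mes F ≤ Γ.degBdry F / Γ.mes F :=
        div_le_div₀ (le_trans zero_le_one h1) h1 h2 le_rfl
      linarith
    rw [← ENNReal.ofReal_coe_nnreal]
    exact ENNReal.ofReal_le_ofReal hfinal
end

section
/- (Lemma 3.6, co-area formula on an edge) Let L > 0 and let h : [0,L] → ℝ be continuously differentiable on [0,L]. For t ∈ ℝ set Ω_h(t) = {x ∈ [0,L] : h(x) > t}. Then ∫₀^L |h′(x)| dx = ∫_ℝ #(∂Ω_h(t) ∩ (0,L)) dt, where ∂ denotes the topological boundary in ℝ and # denotes cardinality (possibly infinite, the integral taken in [0,∞]). -/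
open scoped Classical ENNReal
open MeasureTheory

/-!
Let `U = {x ∈ (0, L) | h' x ≠ 0}`. It is open, so it is the disjoint union of countably many open
intervals, and on each of them `h` is strictly monotone (Darboux). The change of variables formula
on such an interval `I` gives `∫_I |h'| = |h(I)|`, and summing the indicators of the sets `h(I)`
counts the points of the level set `h⁻¹{t} ∩ U`. By the one-dimensional Sard theorem the critical
values form a null set, and for every other `t` the level set `h⁻¹{t} ∩ (0, L)` lies in `U` and is
exactly `∂Ω_h(t) ∩ (0, L)`: a point where `h = t` and `h' ≠ 0` is not a local maximum of `h`, so
it is approached by `{h > t}`.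
-/

open Set Function Filter

theorem encard_iUnion_eq_tsum_encard {α ι : Type*} {s : ι → Set α}
    (hs : Pairwise (Disjoint on s)) :
    ((⋃ i, s i).encard : ℝ≥0∞) = ∑' i, ((s i).encard : ℝ≥0∞) := by
  simp only [← ENNReal.tsum_set_one]
  exact ENNReal.tsum_biUnion (f := fun _ => 1) fun i _ j _ hij => hs hij

theorem Set.InjOn.encard_inter_preimage_singleton {α β : Type*} {f : α → β} {s : Set α}
    (hf : InjOn f s) (y : β) :
    ((s ∩ f ⁻¹' {y}).encard : ℝ≥0∞) = (f '' s).indicator 1 y := by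
  rw [← (hf.mono inter_subset_left).encard_image, image_inter_preimage]
  by_cases hy : y ∈ f '' s
  · simp [hy, inter_eq_right.2 (singleton_subset_iff.2 hy)]
  · simp [hy, inter_singleton_eq_empty.2 hy]

theorem encard_iUnion_inter_preimage_singleton {α β ι : Type*} {f : α → β} {A : ι → Set α}
    (hA : Pairwise (Disjoint on A)) (hf : ∀ i, InjOn f (A i)) (y : β) :
    (((⋃ i, A i) ∩ f ⁻¹' {y}).encard : ℝ≥0∞) = ∑' i, (f '' A i).indicator 1 y := by
  rw [iUnion_inter, encard_iUnion_eq_tsum_encard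
    fun i j hij => (hA hij).mono inter_subset_left inter_subset_left]
  exact tsum_congr fun i => (hf i).encard_inter_preimage_singleton y

theorem lintegral_iUnion_abs_deriv_eq_lintegral_encard {ι : Type*} [Countable ι] {f f' : ℝ → ℝ}
    {A : ι → Set ℝ} (hm : ∀ i, MeasurableSet (A i)) (hA : Pairwise (Disjoint on A))
    (hf : ∀ i, ∀ x ∈ A i, HasDerivWithinAt f (f' x) (A i) x) (hinj : ∀ i, InjOn f (A i)) :
    ∫⁻ x in ⋃ i, A i, ENNReal.ofReal |f' x| =
      ∫⁻ y, (((⋃ i, A i) ∩ f ⁻¹' {y}).encard : ℝ≥0∞) := by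
  have himage : ∀ i, MeasurableSet (f '' A i) := fun i =>
    measurable_image_of_fderivWithin (hm i) (fun x hx => (hf i x hx).hasFDerivWithinAt) (hinj i)
  calc ∫⁻ x in ⋃ i, A i, ENNReal.ofReal |f' x|
      = ∑' i, ∫⁻ x in A i, ENNReal.ofReal |f' x| := lintegral_iUnion hm hA _
    _ = ∑' i, volume (f '' A i) := by
        refine tsum_congr fun i => ?_
        simpa using (lintegral_image_eq_lintegral_abs_deriv_mul (hm i) (hf i) (hinj i) 1).symm
    _ = ∑' i, ∫⁻ y, (f '' A i).indicator 1 y :=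
        tsum_congr fun i => (lintegral_indicator_one (himage i)).symm
    _ = ∫⁻ y, ∑' i, (f '' A i).indicator 1 y :=
        (lintegral_tsum fun i => (measurable_const.indicator (himage i)).aemeasurable).symm
    _ = ∫⁻ y, (((⋃ i, A i) ∩ f ⁻¹' {y}).encard : ℝ≥0∞) := by
        simp_rw [encard_iUnion_inter_preimage_singleton hA hinj]

theorem Convex.injOn_of_hasDerivWithinAt_ne_zero {s : Set ℝ} {f f' : ℝ → ℝ} (hs : Convex ℝ s)
    (hf : ∀ x ∈ s, HasDerivWithinAt f (f' x) s x) (hf' : ∀ x ∈ s, f' x ≠ 0) : InjOn f s := by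
  have hcont : ContinuousOn f s := fun x hx => (hf x hx).continuousWithinAt
  have hint : ∀ x ∈ interior s, HasDerivWithinAt f (f' x) (interior s) x :=
    fun x hx => (hf x (interior_subset hx)).mono interior_subset
  rcases hasDerivWithinAt_forall_lt_or_forall_gt_of_forall_ne hs hf hf' with hneg | hpos
  · exact (strictAntiOn_of_hasDerivWithinAt_neg hs hcont hint
      fun x hx => hneg x (interior_subset hx)).injOn
  · exact (strictMonoOn_of_hasDerivWithinAt_pos hs hcont hint
      fun x hx => hpos x (interior_subset hx)).injOn

theorem IsOpen.exists_countable_pairwiseDisjoint_isPreconnected {α : Type*} [TopologicalSpace α]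
    [LocallyConnectedSpace α] [TopologicalSpace.SeparableSpace α] {U : Set α} (hU : IsOpen U) :
    ∃ C : Set (Set α), C.Countable ∧ C.PairwiseDisjoint id ∧
      (∀ c ∈ C, IsOpen c ∧ IsPreconnected c) ∧ ⋃₀ C = U := by
  have hdisj : (connectedComponentIn U '' U).PairwiseDisjoint id := by
    rintro _ ⟨x, -, rfl⟩ _ ⟨y, -, rfl⟩ hne
    refine disjoint_left.2 fun z hzx hzy => hne ?_
    exact (connectedComponentIn_eq hzx).trans (connectedComponentIn_eq hzy).symm
  refine ⟨_, ?_, hdisj, ?_, ?_⟩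
  · exact hdisj.countable_of_isOpen (fun _ ⟨x, _, hx⟩ => hx ▸ hU.connectedComponentIn)
      fun _ ⟨x, hx, hc⟩ => hc ▸ ⟨x, mem_connectedComponentIn hx⟩
  · rintro _ ⟨x, -, rfl⟩
    exact ⟨hU.connectedComponentIn, isPreconnected_connectedComponentIn⟩
  · refine subset_antisymm (sUnion_subset ?_) fun x hx => ?_
    · rintro _ ⟨x, -, rfl⟩
      exact connectedComponentIn_subset U x
    · exact mem_sUnion_of_mem (mem_connectedComponentIn hx) (mem_image_of_mem _ hx)

theorem volume_image_eq_zero_of_hasDerivWithinAt_eq_zero {s : Set ℝ} {f f' : ℝ → ℝ}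
    (hf : ∀ x ∈ s, HasDerivWithinAt f (f' x) s x) (hf' : ∀ x ∈ s, f' x = 0) :
    volume (f '' s) = 0 :=
  addHaar_image_eq_zero_of_det_fderivWithin_eq_zero volume
    (fun x hx => (hf x hx).hasFDerivWithinAt) fun x hx => by simp [hf' x hx]

theorem ae_notMem_image_setOf_deriv_eq_zero {s : Set ℝ} {f f' : ℝ → ℝ}
    (hf : ∀ x ∈ s, HasDerivAt f (f' x) x) : ∀ᵐ y, y ∉ f '' {x ∈ s | f' x = 0} :=
  measure_eq_zero_iff_ae_notMem.1 <| volume_image_eq_zero_of_hasDerivWithinAt_eq_zero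
    (fun x hx => (hf x hx.1).hasDerivWithinAt) fun _ hx => hx.2

theorem lintegral_abs_deriv_eq_lintegral_encard_preimage {s : Set ℝ} {f f' : ℝ → ℝ}
    (hs : IsOpen s) (hf : ∀ x ∈ s, HasDerivAt f (f' x) x) (hf' : ContinuousOn f' s) :
    ∫⁻ x in s, ENNReal.ofReal |f' x| = ∫⁻ y, ((s ∩ f ⁻¹' {y}).encard : ℝ≥0∞) := by
  set U := {x ∈ s | f' x ≠ 0}
  have hU : IsOpen U := hf'.isOpen_inter_preimage hs isOpen_compl_singleton
  obtain ⟨C, hCc, hCdisj, hCopen, hCU⟩ := hU.exists_countable_pairwiseDisjoint_isPreconnected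
  have := hCc.to_subtype
  have hunion : ⋃ c : C, (c : Set ℝ) = U := by rw [← sUnion_eq_iUnion, hCU]
  have hmem : ∀ c : C, ∀ x ∈ (c : Set ℝ), x ∈ U := fun c x hx => hCU ▸ mem_sUnion_of_mem hx c.2
  have hderiv : ∀ c : C, ∀ x ∈ (c : Set ℝ), HasDerivWithinAt f (f' x) c x :=
    fun c x hx => (hf x (hmem c x hx).1).hasDerivWithinAt
  have key := lintegral_iUnion_abs_deriv_eq_lintegral_encard (A := fun c : C => (c : Set ℝ))
    (fun c => (hCopen c c.2).1.measurableSet) (hCdisj.subtype _ _) hderiv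
    fun c => (hCopen c c.2).2.convex.injOn_of_hasDerivWithinAt_ne_zero (hderiv c)
      fun x hx => (hmem c x hx).2
  rw [hunion] at key
  calc ∫⁻ x in s, ENNReal.ofReal |f' x|
      = ∫⁻ x in {x | f' x ≠ 0}, ENNReal.ofReal |f' x| ∂volume.restrict s :=
        (setLIntegral_eq_of_support_subset (s := {x | f' x ≠ 0})
          fun x hx h0 => hx (by simp [h0])).symm
    _ = ∫⁻ x in U, ENNReal.ofReal |f' x| := by
        rw [Measure.restrict_restrict' hs.measurableSet, inter_comm]; rfl
    _ = ∫⁻ y, ((U ∩ f ⁻¹' {y}).encard : ℝ≥0∞) := key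
    _ = ∫⁻ y, ((s ∩ f ⁻¹' {y}).encard : ℝ≥0∞) := by
        refine lintegral_congr_ae ?_
        filter_upwards [ae_notMem_image_setOf_deriv_eq_zero hf] with y hy
        have hlevel : U ∩ f ⁻¹' {y} = s ∩ f ⁻¹' {y} :=
          subset_antisymm (inter_subset_inter_left _ fun x hx => hx.1)
            fun x ⟨hxs, hxy⟩ => ⟨⟨hxs, fun h0 => hy ⟨x, ⟨hxs, h0⟩, hxy⟩⟩, hxy⟩
        rw [hlevel]

theorem frontier_setOf_lt_inter_eq_of_notMem_image {s : Set ℝ} {f f' : ℝ → ℝ} {t : ℝ}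
    (hf : ∀ x ∈ s, HasDerivAt f (f' x) x) (ht : t ∉ f '' {x ∈ s | f' x = 0}) :
    frontier {x | t < f x} ∩ s = s ∩ f ⁻¹' {t} := by
  ext x
  constructor
  · rintro ⟨hfr, hxs⟩
    have hcont := (hf x hxs).continuousAt
    refine ⟨hxs, ?_⟩
    rcases lt_trichotomy (f x) t with hlt | heq | hgt
    · obtain ⟨y, hyS, hyt⟩ := ((mem_closure_iff_frequently.1 hfr.1).and_eventually
        (hcont.eventually (gt_mem_nhds hlt))).exists
      exact absurd hyS (not_lt.2 hyt.le)
    · exact heq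
    · exact absurd (mem_interior_iff_mem_nhds.2 (hcont.eventually (lt_mem_nhds hgt))) hfr.2
  · rintro ⟨hxs, hxt : f x = t⟩
    refine ⟨⟨?_, fun hint => (interior_subset hint : x ∈ {x | t < f x}).ne' hxt⟩, hxs⟩
    by_contra hcl
    have hmax : IsLocalMax f x := by
      filter_upwards [not_frequently.1 (mt mem_closure_iff_frequently.2 hcl)] with y hy
      exact hxt ▸ not_lt.1 hy
    exact ht ⟨x, ⟨hxs, hmax.hasDerivAt_eq_zero (hf x hxs)⟩, hxt⟩

theorem ofReal_intervalIntegral_eq_setLIntegral_Ioo {a b : ℝ} {g : ℝ → ℝ} (hab : a ≤ b)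
    (hg : IntegrableOn g (Ioc a b)) (hg₀ : 0 ≤ᵐ[volume.restrict (Ioc a b)] g) :
    ENNReal.ofReal (∫ x in a..b, g x) = ∫⁻ x in Ioo a b, ENNReal.ofReal (g x) := by
  rw [intervalIntegral.integral_of_le hab, ofReal_integral_eq_lintegral_ofReal hg hg₀,
    Measure.restrict_congr_set Ioo_ae_eq_Ioc]

/-- **Lemma 3.6 (co-area formula on an edge).** Let `L > 0` and `h : [0,L] → ℝ`
continuously differentiable on `[0,L]` (with continuous derivative `h'`). Then
`∫₀^L |h′(x)| dx = ∫_ℝ #(∂Ω_h(t) ∩ (0,L)) dt`, where `Ω_h(t) = {x ∈ [0,L] : h(x) > t}`,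
`∂` is the topological boundary in `ℝ` and `#` the (possibly infinite) cardinality. -/
theorem coarea_formula_edge (L : ℝ) (hL : 0 < L) (h h' : ℝ → ℝ)
    (hc : ContinuousOn h' (Set.Icc 0 L))
    (hd : ∀ x ∈ Set.Icc 0 L, HasDerivWithinAt h (h' x) (Set.Icc 0 L) x) :
    ENNReal.ofReal (∫ x in (0:ℝ)..L, |h' x|) =
      ∫⁻ t : ℝ,
        ((frontier {x : ℝ | x ∈ Set.Icc 0 L ∧ t < h x} ∩ Set.Ioo 0 L).encard : ℝ≥0∞) := by
  have hderiv : ∀ x ∈ Ioo 0 L, HasDerivAt h (h' x) x := fun x hx =>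
    (hd x (Ioo_subset_Icc_self hx)).hasDerivAt (Icc_mem_nhds hx.1 hx.2)
  have hfrontier : ∀ t, frontier {x | x ∈ Icc 0 L ∧ t < h x} ∩ Ioo 0 L =
      frontier {x | t < h x} ∩ Ioo 0 L := fun t => by
    rw [← frontier_inter_open_inter isOpen_Ioo, ← frontier_inter_open_inter (s := {x | t < h x})
      isOpen_Ioo]
    congr 2
    ext x
    exact ⟨fun ⟨⟨_, hxt⟩, hx⟩ => ⟨hxt, hx⟩, fun ⟨hxt, hx⟩ => ⟨⟨Ioo_subset_Icc_self hx, hxt⟩, hx⟩⟩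
  calc ENNReal.ofReal (∫ x in (0:ℝ)..L, |h' x|)
      = ∫⁻ x in Ioo 0 L, ENNReal.ofReal |h' x| :=
        ofReal_intervalIntegral_eq_setLIntegral_Ioo hL.le
          (hc.abs.integrableOn_Icc.mono_set Ioc_subset_Icc_self)
          (Eventually.of_forall fun _ => abs_nonneg _)
    _ = ∫⁻ t, ((Ioo 0 L ∩ h ⁻¹' {t}).encard : ℝ≥0∞) :=
        lintegral_abs_deriv_eq_lintegral_encard_preimage isOpen_Ioo hderiv
          (hc.mono Ioo_subset_Icc_self)
    _ = _ := by
        refine lintegral_congr_ae ?_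
        filter_upwards [ae_notMem_image_setOf_deriv_eq_zero hderiv] with t ht
        rw [hfrontier, frontier_setOf_lt_inter_eq_of_notMem_image hderiv ht]
end

section
/- (Theorem A.1, first estimate: Cheeger inequality for discrete weighted Laplacians) Let (V, m, b) be a weighted graph and let d be an intrinsic edge weight, with isoperimetric constant α = α_d(V). Then for every finitely supported u : V → ℝ, α² · Σ_{v ∈ V} m(v) u(v)² ≤ 2 · Q(u). In particular, the bottom of the spectrum of the Friedrichs extension h of the weighted Laplacian satisfies λ₀(h) ≥ α²/2. -/
open scoped Classical ENNReal
open MeasureTheory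

section CheegerAux

variable (Γ : WeightedGraph) (d : Γ.E → ℝ)

lemma WG_Eb_finite (X : Finset Γ.V) : (Γ.Eb (↑X : Set Γ.V)).Finite := by
  apply Set.Finite.subset (Set.Finite.biUnion X.finite_toSet fun v _ => Γ.locfin v)
  intro e he
  rcases he with ⟨h1, _⟩ | ⟨h1, _⟩
  · exact Set.mem_biUnion h1 (Or.inl rfl)
  · exact Set.mem_biUnion h1 (Or.inr rfl)

lemma WG_elem_nonneg (hd : ∀ e, 0 < d e) :
    ∀ r ∈ {r : ℝ | ∃ X : Finset Γ.V, ↑X ⊆ (Set.univ : Set Γ.V) ∧ X.Nonempty ∧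
      r = (∑ᶠ e ∈ Γ.Eb ↑X, d e * Γ.b e) / ∑ v ∈ X, Γ.m v}, 0 ≤ r := by
  rintro r ⟨X, -, hX, rfl⟩
  apply div_nonneg
  · rw [finsum_mem_eq_finite_toFinset_sum _ (WG_Eb_finite Γ X)]
    exact Finset.sum_nonneg fun e _ => le_of_lt (mul_pos (hd e) (Γ.b_pos e))
  · exact Finset.sum_nonneg fun v _ => (Γ.m_pos v).le

lemma WG_alphaD_nonneg (hd : ∀ e, 0 < d e) : 0 ≤ Γ.alphaD d Set.univ :=
  Real.sInf_nonneg (WG_elem_nonneg Γ d hd)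

lemma WG_alphaD_le (hd : ∀ e, 0 < d e) (X : Finset Γ.V) (hX : X.Nonempty) :
    Γ.alphaD d Set.univ * ∑ v ∈ X, Γ.m v ≤
      ∑ e ∈ (WG_Eb_finite Γ X).toFinset, d e * Γ.b e := by
  have hM : 0 < ∑ v ∈ X, Γ.m v := Finset.sum_pos (fun v _ => Γ.m_pos v) hX
  have hmem : (∑ e ∈ (WG_Eb_finite Γ X).toFinset, d e * Γ.b e) / (∑ v ∈ X, Γ.m v) ∈
      {r : ℝ | ∃ X : Finset Γ.V, ↑X ⊆ (Set.univ : Set Γ.V) ∧ X.Nonempty ∧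
        r = (∑ᶠ e ∈ Γ.Eb ↑X, d e * Γ.b e) / ∑ v ∈ X, Γ.m v} := by
    exact ⟨X, Set.subset_univ _, hX,
      by rw [finsum_mem_eq_finite_toFinset_sum _ (WG_Eb_finite Γ X)]⟩
  have hle : Γ.alphaD d Set.univ ≤
      (∑ e ∈ (WG_Eb_finite Γ X).toFinset, d e * Γ.b e) / (∑ v ∈ X, Γ.m v) :=
    csInf_le ⟨0, WG_elem_nonneg Γ d hd⟩ hmem
  exact (le_div_iff₀ hM).mp hle

lemma WG_coarea (hd : ∀ e, 0 < d e) :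
    ∀ (n : ℕ) (S : Finset Γ.V) (T : Finset Γ.E),
      (∀ e, ((Γ.ends e).1 ∈ S ∨ (Γ.ends e).2 ∈ S) → e ∈ T) →
      ∀ w : Γ.V → ℝ, (∀ v, 0 ≤ w v) → (∀ v, w v ≠ 0 → v ∈ S) →
        (S.filter fun v => w v ≠ 0).card ≤ n →
        Γ.alphaD d Set.univ * ∑ v ∈ S, Γ.m v * w v ≤
          ∑ e ∈ T, d e * Γ.b e * |w (Γ.ends e).2 - w (Γ.ends e).1| := by
  intro n
  induction n with
  | zero =>
    intro S T hT w hw hsupp hcard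
    have hΩ : (S.filter fun v => w v ≠ 0) = ∅ := Finset.card_eq_zero.mp (le_antisymm hcard (Nat.zero_le _))
    have h0 : ∀ v, w v = 0 := by
      intro v
      by_contra h
      have : v ∈ S.filter fun v => w v ≠ 0 := Finset.mem_filter.mpr ⟨hsupp v h, h⟩
      simp [hΩ] at this
    simp [h0]
  | succ n ih =>
    intro S T hT w hw hsupp hcard
    by_cases hΩne : (S.filter fun v => w v ≠ 0).Nonempty
    swap
    · have h0 : ∀ v, w v = 0 := by
        intro v
        by_contra h
        exact hΩne ⟨v, Finset.mem_filter.mpr ⟨hsupp v h, h⟩⟩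
      simp [h0]
    set Ω : Finset Γ.V := S.filter fun v => w v ≠ 0 with hΩdef
    obtain ⟨v0, hv0, hc⟩ := Ω.exists_mem_eq_inf' hΩne w
    set c : ℝ := Ω.inf' hΩne w with hcdef
    have hv0S : v0 ∈ S := (Finset.mem_filter.mp hv0).1
    have hv0ne : w v0 ≠ 0 := (Finset.mem_filter.mp hv0).2
    have hcpos : 0 < c := by
      rw [hc]; exact lt_of_le_of_ne (hw v0) (Ne.symm hv0ne)
    have hcle : ∀ v ∈ Ω, c ≤ w v := fun v hv => Finset.inf'_le w hv
    set w' : Γ.V → ℝ := fun v => w v - if v ∈ Ω then c else 0 with hw'def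
    have hzero : ∀ v, v ∉ Ω → w v = 0 := by
      intro v hv
      by_contra h
      exact hv (Finset.mem_filter.mpr ⟨hsupp v h, h⟩)
    have hw' : ∀ v, 0 ≤ w' v := by
      intro v
      by_cases hv : v ∈ Ω
      · simp only [hw'def, if_pos hv]
        linarith [hcle v hv]
      · simp [hw'def, if_neg hv, hzero v hv]
    have hw'zero : ∀ v, v ∉ Ω → w' v = 0 := by
      intro v hv
      simp [hw'def, if_neg hv, hzero v hv]
    have hw'supp : ∀ v, w' v ≠ 0 → v ∈ Ω := by
      intro v h
      by_contra hv
      exact h (hw'zero v hv)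
    have hw'v0 : w' v0 = 0 := by
      simp only [hw'def, if_pos hv0, ← hcdef, hc, sub_self]
    have hcard' : (S.filter fun v => w' v ≠ 0).card ≤ n := by
      have hsub : (S.filter fun v => w' v ≠ 0) ⊆ Ω.erase v0 := by
        intro v hv
        have h := (Finset.mem_filter.mp hv).2
        refine Finset.mem_erase.mpr ⟨?_, hw'supp v h⟩
        intro hvv0; exact h (hvv0 ▸ hw'v0)
      have h1 := Finset.card_le_card hsub
      have h2 := Finset.card_erase_of_mem hv0
      omega
    have IH := ih S T hT w' hw' (fun v h => (Finset.mem_filter.mp (hw'supp v h)).1) hcard'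
    -- vertex-side split
    have hvsplit : ∑ v ∈ S, Γ.m v * w v
        = ∑ v ∈ S, Γ.m v * w' v + c * ∑ v ∈ Ω, Γ.m v := by
      have hpt : ∀ v ∈ S, Γ.m v * w v
          = Γ.m v * w' v + (if w v ≠ 0 then c * Γ.m v else 0) := by
        intro v hv
        by_cases h : w v ≠ 0
        · have hvΩ : v ∈ Ω := Finset.mem_filter.mpr ⟨hv, h⟩
          simp only [hw'def, if_pos hvΩ, if_pos h]
          ring
        · have hvΩ : v ∉ Ω := fun hx => h (Finset.mem_filter.mp hx).2
          simp only [hw'def, if_neg hvΩ, if_neg h]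
          ring
      rw [Finset.sum_congr rfl hpt, Finset.sum_add_distrib, ← Finset.sum_filter, ← hΩdef,
        ← Finset.mul_sum]
    -- edge-side split
    have hEbsub : ∀ e, e ∈ Γ.Eb (↑Ω : Set Γ.V) → e ∈ T := by
      intro e he
      rcases he with ⟨h1, _⟩ | ⟨h1, _⟩
      · exact hT e (Or.inl (Finset.mem_filter.mp h1).1)
      · exact hT e (Or.inr (Finset.mem_filter.mp h1).1)
    have hesplit : ∀ e, |w (Γ.ends e).2 - w (Γ.ends e).1|
        = (if e ∈ Γ.Eb (↑Ω : Set Γ.V) then c else 0)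
          + |w' (Γ.ends e).2 - w' (Γ.ends e).1| := by
      intro e
      have hEb : e ∈ Γ.Eb (↑Ω : Set Γ.V) ↔
          Xor' ((Γ.ends e).1 ∈ Ω) ((Γ.ends e).2 ∈ Ω) := by
        simp [WeightedGraph.Eb]
      by_cases hx : (Γ.ends e).1 ∈ Ω <;> by_cases hy : (Γ.ends e).2 ∈ Ω
      · have hne : e ∉ Γ.Eb (↑Ω : Set Γ.V) := by simp [hEb, Xor', hx, hy]
        simp only [hw'def, if_neg hne, if_pos hx, if_pos hy, zero_add]
        congr 1; ring
      · have hme : e ∈ Γ.Eb (↑Ω : Set Γ.V) := by simp [hEb, Xor', hx, hy]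
        have h1 : c ≤ w (Γ.ends e).1 := hcle _ hx
        simp only [hw'def, if_pos hme, if_pos hx, if_neg hy, hzero _ hy]
        rw [abs_of_nonpos (by linarith), abs_of_nonpos (by linarith)]
        ring
      · have hme : e ∈ Γ.Eb (↑Ω : Set Γ.V) := by simp [hEb, Xor', hx, hy]
        have h1 : c ≤ w (Γ.ends e).2 := hcle _ hy
        simp only [hw'def, if_pos hme, if_pos hy, if_neg hx, hzero _ hx]
        rw [abs_of_nonneg (by linarith), abs_of_nonneg (by linarith)]
        ring
      · have hne : e ∉ Γ.Eb (↑Ω : Set Γ.V) := by simp [hEb, Xor', hx, hy]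
        simp only [hw'def, if_neg hne, if_neg hx, if_neg hy, zero_add]
        congr 1; ring
    have hTfilter : T.filter (fun e => e ∈ Γ.Eb (↑Ω : Set Γ.V)) = (WG_Eb_finite Γ Ω).toFinset := by
      ext e
      simp only [Finset.mem_filter, Set.Finite.mem_toFinset]
      exact ⟨fun h => h.2, fun h => ⟨hEbsub e h, h⟩⟩
    have hsum : ∑ e ∈ T, d e * Γ.b e * |w (Γ.ends e).2 - w (Γ.ends e).1|
        = c * ∑ e ∈ (WG_Eb_finite Γ Ω).toFinset, d e * Γ.b e
          + ∑ e ∈ T, d e * Γ.b e * |w' (Γ.ends e).2 - w' (Γ.ends e).1| := by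
      have hpt : ∀ e ∈ T, d e * Γ.b e * |w (Γ.ends e).2 - w (Γ.ends e).1|
          = (if e ∈ Γ.Eb (↑Ω : Set Γ.V) then d e * Γ.b e * c else 0)
            + d e * Γ.b e * |w' (Γ.ends e).2 - w' (Γ.ends e).1| := by
        intro e _
        rw [hesplit e]
        by_cases h : e ∈ Γ.Eb (↑Ω : Set Γ.V) <;> simp [h] <;> ring
      rw [Finset.sum_congr rfl hpt, Finset.sum_add_distrib, ← Finset.sum_filter, hTfilter]
      congr 1
      rw [Finset.mul_sum]
      exact Finset.sum_congr rfl fun e _ => by ring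
    have hkey := WG_alphaD_le Γ d hd Ω hΩne
    have hmul : c * (Γ.alphaD d Set.univ * ∑ v ∈ Ω, Γ.m v)
        ≤ c * ∑ e ∈ (WG_Eb_finite Γ Ω).toFinset, d e * Γ.b e :=
      mul_le_mul_of_nonneg_left hkey hcpos.le
    have heq : Γ.alphaD d Set.univ * (c * ∑ v ∈ Ω, Γ.m v)
        = c * (Γ.alphaD d Set.univ * ∑ v ∈ Ω, Γ.m v) := by ring
    rw [hvsplit, hsum, mul_add]
    linarith [IH, hmul, heq]

lemma WG_normSq_eq (u : Γ.V → ℝ) (hu : (Function.support u).Finite) :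
    Γ.normSqD u = ∑ v ∈ hu.toFinset, Γ.m v * u v ^ 2 := by
  apply finsum_eq_sum_of_support_subset
  intro v hv
  simp only [Function.mem_support] at hv
  have : u v ≠ 0 := by intro h; apply hv; simp [h]
  simpa using this

lemma WG_main (hd : ∀ e, 0 < d e) (hintr : Γ.Intrinsic d) (u : Γ.V → ℝ)
    (hu : (Function.support u).Finite) :
    Γ.alphaD d Set.univ ^ 2 * Γ.normSqD u ≤ 2 * Γ.Q u := by
  classical
  set α : ℝ := Γ.alphaD d Set.univ with hαdef
  set S : Finset Γ.V := hu.toFinset with hSdef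
  set T : Finset Γ.E := S.biUnion (fun v => (Γ.locfin v).toFinset) with hTdef
  have hmemS : ∀ v, v ∉ S → u v = 0 := by
    intro v hv
    by_contra h
    exact hv (hu.mem_toFinset.mpr h)
  have hT : ∀ e, ((Γ.ends e).1 ∈ S ∨ (Γ.ends e).2 ∈ S) → e ∈ T := by
    intro e he
    rcases he with h | h
    · exact Finset.mem_biUnion.mpr ⟨_, h, (Γ.locfin _).mem_toFinset.mpr (Or.inl rfl)⟩
    · exact Finset.mem_biUnion.mpr ⟨_, h, (Γ.locfin _).mem_toFinset.mpr (Or.inr rfl)⟩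
  set N : ℝ := ∑ v ∈ S, Γ.m v * u v ^ 2 with hNdef
  have hNeq : Γ.normSqD u = N := WG_normSq_eq Γ u hu
  set QT : ℝ := ∑ e ∈ T, Γ.b e * (u (Γ.ends e).2 - u (Γ.ends e).1) ^ 2 with hQTdef
  have hQeq : Γ.Q u = QT := by
    apply finsum_eq_sum_of_support_subset
    intro e he
    simp only [Function.mem_support] at he
    have h12 : u (Γ.ends e).1 ≠ 0 ∨ u (Γ.ends e).2 ≠ 0 := by
      by_contra h
      push_neg at h
      apply he
      simp [h.1, h.2]
    apply hT
    rcases h12 with h | h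
    · exact Or.inl (hu.mem_toFinset.mpr h)
    · exact Or.inr (hu.mem_toFinset.mpr h)
  set F : ℝ := ∑ e ∈ T, d e * Γ.b e * |u (Γ.ends e).2 ^ 2 - u (Γ.ends e).1 ^ 2| with hFdef
  have hco : α * N ≤ F := by
    apply WG_coarea Γ d hd (S.filter fun v => u v ^ 2 ≠ 0).card S T hT
      (fun v => u v ^ 2) (fun v => sq_nonneg _)
    · intro v h
      apply hu.mem_toFinset.mpr
      intro h0
      exact h (by simp [h0])
    · exact le_refl _
  set G : ℝ := ∑ e ∈ T, d e ^ 2 * Γ.b e * (u (Γ.ends e).2 + u (Γ.ends e).1) ^ 2 with hGdef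
  have hCS : F ^ 2 ≤ QT * G := by
    have h := Finset.sum_mul_sq_le_sq_mul_sq T
      (fun e => Real.sqrt (Γ.b e) * |u (Γ.ends e).2 - u (Γ.ends e).1|)
      (fun e => d e * (Real.sqrt (Γ.b e) * |u (Γ.ends e).2 + u (Γ.ends e).1|))
    have h1 : ∀ e ∈ T, (Real.sqrt (Γ.b e) * |u (Γ.ends e).2 - u (Γ.ends e).1|)
        * (d e * (Real.sqrt (Γ.b e) * |u (Γ.ends e).2 + u (Γ.ends e).1|))
        = d e * Γ.b e * |u (Γ.ends e).2 ^ 2 - u (Γ.ends e).1 ^ 2| := by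
      intro e _
      have hb : Real.sqrt (Γ.b e) * Real.sqrt (Γ.b e) = Γ.b e :=
        Real.mul_self_sqrt (Γ.b_pos e).le
      have habs : |u (Γ.ends e).2 - u (Γ.ends e).1| * |u (Γ.ends e).2 + u (Γ.ends e).1|
          = |u (Γ.ends e).2 ^ 2 - u (Γ.ends e).1 ^ 2| := by
        rw [← abs_mul]
        congr 1
        ring
      calc (Real.sqrt (Γ.b e) * |u (Γ.ends e).2 - u (Γ.ends e).1|)
            * (d e * (Real.sqrt (Γ.b e) * |u (Γ.ends e).2 + u (Γ.ends e).1|))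
          = d e * (Real.sqrt (Γ.b e) * Real.sqrt (Γ.b e))
            * (|u (Γ.ends e).2 - u (Γ.ends e).1| * |u (Γ.ends e).2 + u (Γ.ends e).1|) := by ring
        _ = d e * Γ.b e * |u (Γ.ends e).2 ^ 2 - u (Γ.ends e).1 ^ 2| := by rw [hb, habs]
    have h2 : ∀ e ∈ T, (Real.sqrt (Γ.b e) * |u (Γ.ends e).2 - u (Γ.ends e).1|) ^ 2
        = Γ.b e * (u (Γ.ends e).2 - u (Γ.ends e).1) ^ 2 := by
      intro e _
      rw [mul_pow, Real.sq_sqrt (Γ.b_pos e).le, sq_abs]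
    have h3 : ∀ e ∈ T, (d e * (Real.sqrt (Γ.b e) * |u (Γ.ends e).2 + u (Γ.ends e).1|)) ^ 2
        = d e ^ 2 * Γ.b e * (u (Γ.ends e).2 + u (Γ.ends e).1) ^ 2 := by
      intro e _
      rw [mul_pow, mul_pow, Real.sq_sqrt (Γ.b_pos e).le, sq_abs]
      ring
    rw [Finset.sum_congr rfl h1, Finset.sum_congr rfl h2, Finset.sum_congr rfl h3] at h
    exact h
  have hswap : ∑ e ∈ T, d e ^ 2 * Γ.b e * (u (Γ.ends e).1 ^ 2 + u (Γ.ends e).2 ^ 2) ≤ N := by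
    have hpt : ∀ e ∈ T, d e ^ 2 * Γ.b e * (u (Γ.ends e).1 ^ 2 + u (Γ.ends e).2 ^ 2)
        = ∑ v ∈ S, ((if (Γ.ends e).1 = v then d e ^ 2 * Γ.b e * u v ^ 2 else 0)
          + (if (Γ.ends e).2 = v then d e ^ 2 * Γ.b e * u v ^ 2 else 0)) := by
      intro e _
      rw [Finset.sum_add_distrib, Finset.sum_ite_eq, Finset.sum_ite_eq]
      by_cases hx : (Γ.ends e).1 ∈ S <;> by_cases hy : (Γ.ends e).2 ∈ S <;>
        simp only [if_pos, if_neg, hx, hy, if_true, if_false]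
      · ring
      · rw [hmemS _ hy]; ring
      · rw [hmemS _ hx]; ring
      · rw [hmemS _ hx, hmemS _ hy]; ring
    have hinner : ∀ v ∈ S, ∑ e ∈ T, ((if (Γ.ends e).1 = v then d e ^ 2 * Γ.b e * u v ^ 2 else 0)
        + (if (Γ.ends e).2 = v then d e ^ 2 * Γ.b e * u v ^ 2 else 0)) ≤ Γ.m v * u v ^ 2 := by
      intro v _
      have hpt2 : ∀ e ∈ T, ((if (Γ.ends e).1 = v then d e ^ 2 * Γ.b e * u v ^ 2 else 0)
          + (if (Γ.ends e).2 = v then d e ^ 2 * Γ.b e * u v ^ 2 else 0))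
          = (if (Γ.ends e).1 = v ∨ (Γ.ends e).2 = v then d e ^ 2 * Γ.b e else 0) * u v ^ 2 := by
        intro e _
        by_cases h1 : (Γ.ends e).1 = v <;> by_cases h2 : (Γ.ends e).2 = v
        · exact absurd (h1.trans h2.symm) (Γ.no_loops e)
        · simp [h1, h2]
        · simp [h1, h2]
        · simp [h1, h2]
      rw [Finset.sum_congr rfl hpt2, ← Finset.sum_mul]
      have hdeg : ∑ e ∈ T, (if (Γ.ends e).1 = v ∨ (Γ.ends e).2 = v then d e ^ 2 * Γ.b e else 0)
          ≤ Γ.m v := by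
        rw [← Finset.sum_filter]
        refine le_trans (Finset.sum_le_sum_of_subset_of_nonneg ?_ ?_) (hintr v)
        · intro e he
          exact (Γ.locfin v).mem_toFinset.mpr (Finset.mem_filter.mp he).2
        · intro e _ _
          exact mul_nonneg (sq_nonneg _) (Γ.b_pos e).le
      exact mul_le_mul_of_nonneg_right hdeg (sq_nonneg _)
    calc ∑ e ∈ T, d e ^ 2 * Γ.b e * (u (Γ.ends e).1 ^ 2 + u (Γ.ends e).2 ^ 2)
        = ∑ e ∈ T, ∑ v ∈ S, ((if (Γ.ends e).1 = v then d e ^ 2 * Γ.b e * u v ^ 2 else 0)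
          + (if (Γ.ends e).2 = v then d e ^ 2 * Γ.b e * u v ^ 2 else 0)) :=
          Finset.sum_congr rfl hpt
      _ = ∑ v ∈ S, ∑ e ∈ T, ((if (Γ.ends e).1 = v then d e ^ 2 * Γ.b e * u v ^ 2 else 0)
          + (if (Γ.ends e).2 = v then d e ^ 2 * Γ.b e * u v ^ 2 else 0)) := Finset.sum_comm
      _ ≤ ∑ v ∈ S, Γ.m v * u v ^ 2 := Finset.sum_le_sum hinner
  have hG : G ≤ 2 * N := by
    have hpt : ∀ e ∈ T, d e ^ 2 * Γ.b e * (u (Γ.ends e).2 + u (Γ.ends e).1) ^ 2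
        ≤ 2 * (d e ^ 2 * Γ.b e * (u (Γ.ends e).1 ^ 2 + u (Γ.ends e).2 ^ 2)) := by
      intro e _
      have hsq : (u (Γ.ends e).2 + u (Γ.ends e).1) ^ 2
          ≤ 2 * (u (Γ.ends e).1 ^ 2 + u (Γ.ends e).2 ^ 2) := by
        nlinarith [sq_nonneg (u (Γ.ends e).2 - u (Γ.ends e).1)]
      have hnn : 0 ≤ d e ^ 2 * Γ.b e := mul_nonneg (sq_nonneg _) (Γ.b_pos e).le
      calc d e ^ 2 * Γ.b e * (u (Γ.ends e).2 + u (Γ.ends e).1) ^ 2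
          ≤ d e ^ 2 * Γ.b e * (2 * (u (Γ.ends e).1 ^ 2 + u (Γ.ends e).2 ^ 2)) :=
            mul_le_mul_of_nonneg_left hsq hnn
        _ = 2 * (d e ^ 2 * Γ.b e * (u (Γ.ends e).1 ^ 2 + u (Γ.ends e).2 ^ 2)) := by ring
    calc G ≤ ∑ e ∈ T, 2 * (d e ^ 2 * Γ.b e * (u (Γ.ends e).1 ^ 2 + u (Γ.ends e).2 ^ 2)) :=
        Finset.sum_le_sum hpt
      _ = 2 * ∑ e ∈ T, d e ^ 2 * Γ.b e * (u (Γ.ends e).1 ^ 2 + u (Γ.ends e).2 ^ 2) := by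
        rw [Finset.mul_sum]
      _ ≤ 2 * N := by linarith [hswap]
  have hα : 0 ≤ α := WG_alphaD_nonneg Γ d hd
  have hN0 : 0 ≤ N := Finset.sum_nonneg fun v _ => mul_nonneg (Γ.m_pos v).le (sq_nonneg _)
  have hQT0 : 0 ≤ QT := Finset.sum_nonneg fun e _ => mul_nonneg (Γ.b_pos e).le (sq_nonneg _)
  have h1 : (α * N) ^ 2 ≤ F ^ 2 := pow_le_pow_left₀ (mul_nonneg hα hN0) hco 2
  have h2 : QT * G ≤ QT * (2 * N) := mul_le_mul_of_nonneg_left hG hQT0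
  have h3 : (α * N) ^ 2 ≤ QT * (2 * N) := le_trans h1 (le_trans hCS h2)
  rw [hNeq, hQeq]
  rcases eq_or_lt_of_le hN0 with hN | hN
  · rw [← hN]
    linarith
  · nlinarith [h3, hN]

end CheegerAux

/-- **Theorem A.1 (Cheeger inequality for discrete weighted Laplacians).**
Let `(V, m, b)` be a weighted graph and `d` an intrinsic edge weight with
isoperimetric constant `α = α_d(V)`. Then for every finitely supported `u : V → ℝ`,
`α²·Σ_v m(v) u(v)² ≤ 2·Q(u)`; in particular `λ₀(h) ≥ α²/2`. -/
theorem discrete_cheeger_inequality (Γ : WeightedGraph) (d : Γ.E → ℝ)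
    (hd : ∀ e, 0 < d e) (hintr : Γ.Intrinsic d) :
    (∀ u : Γ.V → ℝ, (Function.support u).Finite →
      Γ.alphaD d Set.univ ^ 2 * Γ.normSqD u ≤ 2 * Γ.Q u) ∧
    Γ.alphaD d Set.univ ^ 2 / 2 ≤ Γ.lambda0 := by
  constructor
  · exact fun u hu => WG_main Γ d hd hintr u hu
  · apply le_csInf
    · have : Nonempty Γ.V := Γ.infV.nonempty
      obtain ⟨v0⟩ := this
      set u : Γ.V → ℝ := fun v => if v = v0 then 1 else 0 with hudef
      have hfin : (Function.support u).Finite := by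
        apply Set.Finite.subset (Set.finite_singleton v0)
        intro v hv
        simp only [Function.mem_support, hudef] at hv
        by_contra h
        simp only [Set.mem_singleton_iff] at h
        exact hv (if_neg h)
      have hne : u ≠ 0 := by
        intro h
        have : u v0 = 0 := by rw [h]; rfl
        simp [hudef] at this
      exact ⟨_, ⟨u, hfin, hne, rfl⟩⟩
    · rintro r ⟨u, hfin, hne, rfl⟩
      have hmain := WG_main Γ d hd hintr u hfin
      have hNeq := WG_normSq_eq Γ u hfin
      have hNpos : 0 < Γ.normSqD u := by
        rw [hNeq]
        obtain ⟨v, hv⟩ := Function.ne_iff.mp hne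
        refine Finset.sum_pos' (fun w _ => mul_nonneg (Γ.m_pos w).le (sq_nonneg _)) ?_
        refine ⟨v, hfin.mem_toFinset.mpr hv, ?_⟩
        have h2 : 0 < u v ^ 2 := by rw [← sq_abs]; exact pow_pos (abs_pos.mpr hv) 2
        exact mul_pos (Γ.m_pos v) h2
      rw [div_le_div_iff₀ (by norm_num) hNpos]
      linarith
end

section
/- (Theorem A.1, essential-spectrum estimate) Let (V, m, b) be a weighted graph and let d be an intrinsic edge weight. Then for every finite X ⊆ V and every finitely supported u : V → ℝ that vanishes on X, α_d(V ∖ X)² · Σ_{v ∈ V} m(v) u(v)² ≤ 2 · Q(u). In particular, the bottom of the essential spectrum of the Friedrichs extension h satisfies λ₀^ess(h) ≥ α_ess²/2, where α_ess = sup{ α_d(V ∖ X) : X ⊆ V finite }. -/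
open scoped Classical ENNReal
open MeasureTheory

noncomputable section AuxCheeger

open Finset

/-- Edges incident to a finite vertex set. -/
def auxIncid (Γ : WeightedGraph) (Ω : Finset Γ.V) : Finset Γ.E :=
  Ω.biUnion fun v => (Γ.locfin v).toFinset

lemma mem_auxIncid {Γ : WeightedGraph} {Ω : Finset Γ.V} {e : Γ.E} :
    e ∈ auxIncid Γ Ω ↔ (Γ.ends e).1 ∈ Ω ∨ (Γ.ends e).2 ∈ Ω := by
  simp only [auxIncid, Finset.mem_biUnion, Set.Finite.mem_toFinset, Set.mem_setOf_eq]
  constructor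
  · rintro ⟨v, hv, h | h⟩
    · exact Or.inl (h ▸ hv)
    · exact Or.inr (h ▸ hv)
  · rintro (h | h)
    · exact ⟨_, h, Or.inl rfl⟩
    · exact ⟨_, h, Or.inr rfl⟩

lemma Eb_subset_auxIncid {Γ : WeightedGraph} {Ω : Finset Γ.V} :
    Γ.Eb ↑Ω ⊆ ↑(auxIncid Γ Ω) := by
  intro e he
  rcases he with ⟨h1, _⟩ | ⟨h2, _⟩
  · exact Finset.mem_coe.2 (mem_auxIncid.2 (Or.inl h1))
  · exact Finset.mem_coe.2 (mem_auxIncid.2 (Or.inr h2))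

lemma finsum_Eb {Γ : WeightedGraph} (f : Γ.E → ℝ) (Ω : Finset Γ.V) (F : Finset Γ.E)
    (h : Γ.Eb ↑Ω ⊆ ↑F) :
    ∑ᶠ e ∈ Γ.Eb ↑Ω, f e = ∑ e ∈ F.filter (fun e => e ∈ Γ.Eb ↑Ω), f e := by
  have : Γ.Eb ↑Ω = ↑(F.filter (fun e => e ∈ Γ.Eb ↑Ω)) := by
    ext e
    simp only [Finset.coe_filter, Set.mem_setOf_eq]
    exact ⟨fun he => ⟨h he, he⟩, fun he => he.2⟩
  conv_lhs => rw [this]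
  rw [finsum_mem_coe_finset]

lemma alphaD_set_nonneg {Γ : WeightedGraph} {d : Γ.E → ℝ} (hd : ∀ e, 0 < d e) (U : Set Γ.V) :
    ∀ r ∈ {r : ℝ | ∃ X : Finset Γ.V, ↑X ⊆ U ∧ X.Nonempty ∧
      r = (∑ᶠ e ∈ Γ.Eb ↑X, d e * Γ.b e) / ∑ v ∈ X, Γ.m v}, 0 ≤ r := by
  rintro r ⟨Ω, hΩU, hne, rfl⟩
  apply div_nonneg
  · rw [finsum_Eb _ Ω (auxIncid Γ Ω) Eb_subset_auxIncid]
    exact Finset.sum_nonneg fun e _ => mul_nonneg (hd e).le (Γ.b_pos e).le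
  · exact Finset.sum_nonneg fun v _ => (Γ.m_pos v).le

lemma alphaD_nonneg {Γ : WeightedGraph} {d : Γ.E → ℝ} (hd : ∀ e, 0 < d e) (U : Set Γ.V) :
    0 ≤ Γ.alphaD d U :=
  Real.sInf_nonneg (alphaD_set_nonneg hd U)

lemma alphaD_le {Γ : WeightedGraph} {d : Γ.E → ℝ} (hd : ∀ e, 0 < d e) (U : Set Γ.V)
    (Ω : Finset Γ.V) (hΩU : ↑Ω ⊆ U) (hne : Ω.Nonempty) :
    Γ.alphaD d U * ∑ v ∈ Ω, Γ.m v ≤ ∑ᶠ e ∈ Γ.Eb ↑Ω, d e * Γ.b e := by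
  have hM : 0 < ∑ v ∈ Ω, Γ.m v := Finset.sum_pos (fun v _ => Γ.m_pos v) hne
  have h1 : Γ.alphaD d U ≤ (∑ᶠ e ∈ Γ.Eb ↑Ω, d e * Γ.b e) / ∑ v ∈ Ω, Γ.m v := by
    apply csInf_le
    · exact ⟨0, alphaD_set_nonneg hd U⟩
    · exact ⟨Ω, hΩU, hne, rfl⟩
  calc Γ.alphaD d U * ∑ v ∈ Ω, Γ.m v
      ≤ ((∑ᶠ e ∈ Γ.Eb ↑Ω, d e * Γ.b e) / ∑ v ∈ Ω, Γ.m v) * ∑ v ∈ Ω, Γ.m v :=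
        mul_le_mul_of_nonneg_right h1 hM.le
    _ = ∑ᶠ e ∈ Γ.Eb ↑Ω, d e * Γ.b e := div_mul_cancel₀ _ hM.ne'

lemma alphaD_mono {Γ : WeightedGraph} {d : Γ.E → ℝ} (hd : ∀ e, 0 < d e)
    {X Y : Finset Γ.V} (hXY : X ⊆ Y) :
    Γ.alphaD d (↑X : Set Γ.V)ᶜ ≤ Γ.alphaD d (↑Y : Set Γ.V)ᶜ := by
  have := Γ.infV
  apply csInf_le_csInf
  · exact ⟨0, alphaD_set_nonneg hd _⟩
  · obtain ⟨v, hv⟩ := Infinite.exists_notMem_finset Y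
    refine ⟨_, {v}, ?_, Finset.singleton_nonempty v, rfl⟩
    intro x hx
    simp only [Finset.coe_singleton, Set.mem_singleton_iff] at hx
    subst hx
    simpa using hv
  · rintro r ⟨Ω, hsub, hne, rfl⟩
    refine ⟨Ω, ?_, hne, rfl⟩
    refine hsub.trans ?_
    exact Set.compl_subset_compl.2 (by exact_mod_cast hXY)

end AuxCheeger
section Coarea
open Finset

lemma coarea {Γ : WeightedGraph} {d : Γ.E → ℝ} (hd : ∀ e, 0 < d e) (X : Finset Γ.V) :
    ∀ n : ℕ, ∀ w : Γ.V → ℝ, ∀ Ω : Finset Γ.V,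
      ((Ω.filter fun v => w v ≠ 0).image w).card ≤ n →
      (∀ v, 0 ≤ w v) → (∀ v, v ∉ Ω → w v = 0) → (∀ v ∈ X, w v = 0) →
      Γ.alphaD d (↑X : Set Γ.V)ᶜ * ∑ v ∈ Ω, Γ.m v * w v ≤
        ∑ e ∈ auxIncid Γ Ω, d e * Γ.b e * |w (Γ.ends e).2 - w (Γ.ends e).1| := by
  intro n
  induction n with
  | zero =>
    intro w Ω hcard hpos hout hX
    have hz : ∀ v, w v = 0 := by
      intro v
      by_contra hv
      have hvΩ : v ∈ Ω := by by_contra h; exact hv (hout v h)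
      have hmem : w v ∈ (Ω.filter fun v => w v ≠ 0).image w :=
        Finset.mem_image_of_mem _ (Finset.mem_filter.2 ⟨hvΩ, hv⟩)
      have := Finset.card_pos.2 ⟨_, hmem⟩
      omega
    simp [hz]
  | succ n ih =>
    intro w Ω hcard hpos hout hX
    set α := Γ.alphaD d (↑X : Set Γ.V)ᶜ with hα
    have hα0 : 0 ≤ α := alphaD_nonneg hd _
    set supp := Ω.filter (fun v => w v ≠ 0) with hsuppdef
    by_cases hne : supp.Nonempty
    swap
    · -- w ≡ 0 again
      have hz : ∀ v, w v = 0 := by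
        intro v
        by_contra hv
        have hvΩ : v ∈ Ω := by by_contra h; exact hv (hout v h)
        exact hne ⟨v, Finset.mem_filter.2 ⟨hvΩ, hv⟩⟩
      simp [hz]
    · have hmem : ∀ v, v ∈ supp ↔ w v ≠ 0 := by
        intro v
        constructor
        · exact fun h => (Finset.mem_filter.1 h).2
        · intro h
          refine Finset.mem_filter.2 ⟨?_, h⟩
          by_contra hh
          exact h (hout v hh)
      set A := supp.image w with hAdef
      have hAne : A.Nonempty := hne.image w
      set c := A.min' hAne with hcdef
      have hcmem : c ∈ A := A.min'_mem hAne
      obtain ⟨v0, hv0supp, hv0⟩ := Finset.mem_image.1 hcmem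
      have hcpos : 0 < c := by
        rw [← hv0]
        exact lt_of_le_of_ne (hpos v0) (Ne.symm ((hmem v0).1 hv0supp))
      have hcle : ∀ v ∈ supp, c ≤ w v := fun v hv =>
        A.min'_le _ (Finset.mem_image_of_mem w hv)
      set w' := fun v => if w v = 0 then 0 else w v - c with hw'
      have hpos' : ∀ v, 0 ≤ w' v := by
        intro v
        simp only [hw']
        split
        · exact le_refl 0
        · next h =>
          have := hcle v ((hmem v).2 h)
          linarith
      have hout' : ∀ v, v ∉ Ω → w' v = 0 := by
        intro v h; simp [hw', hout v h]
      have hX' : ∀ v ∈ X, w' v = 0 := by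
        intro v h; simp [hw', hX v h]
      have hcard' : ((Ω.filter fun v => w' v ≠ 0).image w').card ≤ n := by
        have hsub : (Ω.filter fun v => w' v ≠ 0).image w' ⊆
            (A.image fun a => a - c).erase 0 := by
          intro x hx
          obtain ⟨v, hv, rfl⟩ := Finset.mem_image.1 hx
          have hv' := (Finset.mem_filter.1 hv).2
          have hwv : w v ≠ 0 := by
            intro h
            apply hv'
            simp [hw', h]
          have heq : w' v = w v - c := by simp [hw', hwv]
          refine Finset.mem_erase.2 ⟨hv', ?_⟩
          rw [heq]
          exact Finset.mem_image_of_mem _ (Finset.mem_image_of_mem w ((hmem v).2 hwv))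
        have h0 : (0 : ℝ) ∈ A.image fun a => a - c :=
          Finset.mem_image.2 ⟨c, hcmem, sub_self c⟩
        have h1 := Finset.card_le_card hsub
        have h2 := Finset.card_erase_of_mem h0
        have h3 := Finset.card_image_le (s := A) (f := fun a => a - c)
        have h4 : A.card ≤ n + 1 := hcard
        omega
      have IH := ih w' Ω hcard' hpos' hout' hX'
      -- LHS split
      have hsplit : ∑ v ∈ Ω, Γ.m v * w v
          = (∑ v ∈ Ω, Γ.m v * w' v) + c * ∑ v ∈ supp, Γ.m v := by
        have hterm : ∀ v ∈ Ω, Γ.m v * w v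
            = Γ.m v * w' v + (if w v ≠ 0 then Γ.m v * c else 0) := by
          intro v _
          by_cases h : w v = 0 <;> simp [hw', h] <;> ring
        rw [Finset.sum_congr rfl hterm, Finset.sum_add_distrib]
        congr 1
        rw [← Finset.sum_filter, ← hsuppdef, Finset.mul_sum]
        exact Finset.sum_congr rfl fun v _ => mul_comm _ _
      -- supp facts
      have hsuppX : ↑supp ⊆ ((↑X : Set Γ.V))ᶜ := by
        intro v hv
        rw [Finset.mem_coe] at hv
        have := (hmem v).1 hv
        intro hvX
        exact this (hX v hvX)
      have hEbsub : Γ.Eb ↑supp ⊆ ↑(auxIncid Γ Ω) := by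
        intro e he
        rcases he with ⟨h1, _⟩ | ⟨h2, _⟩
        · exact Finset.mem_coe.2 (mem_auxIncid.2
            (Or.inl (Finset.filter_subset _ _ (Finset.mem_coe.1 h1))))
        · exact Finset.mem_coe.2 (mem_auxIncid.2
            (Or.inr (Finset.filter_subset _ _ (Finset.mem_coe.1 h2))))
      have hiso := alphaD_le hd ((↑X : Set Γ.V))ᶜ supp hsuppX hne
      rw [finsum_Eb _ supp (auxIncid Γ Ω) hEbsub] at hiso
      -- pointwise edge bound
      have hpt : ∀ e ∈ auxIncid Γ Ω,
          d e * Γ.b e * |w' (Γ.ends e).2 - w' (Γ.ends e).1|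
            + (if e ∈ Γ.Eb ↑supp then d e * Γ.b e * c else 0)
          ≤ d e * Γ.b e * |w (Γ.ends e).2 - w (Γ.ends e).1| := by
        intro e _
        have hdb : 0 ≤ d e * Γ.b e := mul_nonneg (hd e).le (Γ.b_pos e).le
        have hEbiff : e ∈ Γ.Eb ↑supp ↔
            Xor' (w (Γ.ends e).1 ≠ 0) (w (Γ.ends e).2 ≠ 0) := by
          simp only [WeightedGraph.Eb, Set.mem_setOf_eq, Finset.mem_coe, hmem]
        by_cases h1 : w (Γ.ends e).1 = 0 <;> by_cases h2 : w (Γ.ends e).2 = 0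
        · have hnin : e ∉ Γ.Eb ↑supp := by
            rw [hEbiff]
            simp [Xor', h1, h2]
          simp [hw', h1, h2, hnin]
        · have hin : e ∈ Γ.Eb ↑supp := by
            rw [hEbiff]
            simp [Xor', h1, h2]
          have hc2 : c ≤ w (Γ.ends e).2 := hcle _ ((hmem _).2 h2)
          rw [if_pos hin]
          simp only [hw', if_pos h1, if_neg h2]
          rw [abs_of_nonneg (by linarith), abs_of_nonneg (by linarith)]
          nlinarith
        · have hin : e ∈ Γ.Eb ↑supp := by
            rw [hEbiff]
            simp [Xor', h1, h2]
          have hc1 : c ≤ w (Γ.ends e).1 := hcle _ ((hmem _).2 h1)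
          rw [if_pos hin]
          simp only [hw', if_pos h2, if_neg h1]
          rw [abs_sub_comm, abs_sub_comm _ (w (Γ.ends e).1)]
          rw [abs_of_nonneg (by linarith), abs_of_nonneg (by linarith)]
          nlinarith
        · have hnin : e ∉ Γ.Eb ↑supp := by
            rw [hEbiff]
            simp [Xor', h1, h2]
          rw [if_neg hnin]
          simp only [hw', if_neg h1, if_neg h2]
          have : w (Γ.ends e).2 - c - (w (Γ.ends e).1 - c)
              = w (Γ.ends e).2 - w (Γ.ends e).1 := by ring
          rw [this, add_zero]
      calc α * ∑ v ∈ Ω, Γ.m v * w v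
          = α * ∑ v ∈ Ω, Γ.m v * w' v + c * (α * ∑ v ∈ supp, Γ.m v) := by
            rw [hsplit]; ring
        _ ≤ (∑ e ∈ auxIncid Γ Ω, d e * Γ.b e * |w' (Γ.ends e).2 - w' (Γ.ends e).1|)
            + c * ∑ e ∈ (auxIncid Γ Ω).filter (fun e => e ∈ Γ.Eb ↑supp), d e * Γ.b e :=
            add_le_add IH (mul_le_mul_of_nonneg_left hiso hcpos.le)
        _ = ∑ e ∈ auxIncid Γ Ω,
            (d e * Γ.b e * |w' (Γ.ends e).2 - w' (Γ.ends e).1|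
              + (if e ∈ Γ.Eb ↑supp then d e * Γ.b e * c else 0)) := by
            rw [Finset.sum_add_distrib]
            congr 1
            rw [← Finset.sum_filter, Finset.mul_sum]
            exact Finset.sum_congr rfl fun e _ => by ring
        _ ≤ ∑ e ∈ auxIncid Γ Ω, d e * Γ.b e * |w (Γ.ends e).2 - w (Γ.ends e).1| :=
            Finset.sum_le_sum hpt

end Coarea
section Part1
open Finset

lemma cheeger_part1 {Γ : WeightedGraph} {d : Γ.E → ℝ} (hd : ∀ e, 0 < d e)
    (hintr : Γ.Intrinsic d) (X : Finset Γ.V) (u : Γ.V → ℝ)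
    (hu : (Function.support u).Finite) (hX0 : ∀ v ∈ X, u v = 0) :
    Γ.alphaD d (↑X : Set Γ.V)ᶜ ^ 2 * Γ.normSqD u ≤ 2 * Γ.Q u := by
  classical
  set α := Γ.alphaD d (↑X : Set Γ.V)ᶜ with hαdef
  have hα0 : 0 ≤ α := alphaD_nonneg hd _
  set S := hu.toFinset with hSdef
  have hS : ∀ v, v ∈ S ↔ u v ≠ 0 := by
    intro v
    rw [hSdef, Set.Finite.mem_toFinset, Function.mem_support]
  set F := auxIncid Γ S with hFdef
  -- norm as finite sum
  have hN : Γ.normSqD u = ∑ v ∈ S, Γ.m v * u v ^ 2 := by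
    apply finsum_eq_sum_of_support_subset
    intro v hv
    rw [Function.mem_support] at hv
    rw [Finset.mem_coe, hS]
    intro h
    apply hv
    rw [h]
    ring
  have hQf : Γ.Q u = ∑ e ∈ F, Γ.b e * (u (Γ.ends e).2 - u (Γ.ends e).1) ^ 2 := by
    apply finsum_eq_sum_of_support_subset
    intro e he
    rw [Function.mem_support] at he
    rw [Finset.mem_coe, hFdef, mem_auxIncid]
    by_contra h
    push_neg at h
    have h1 : u (Γ.ends e).1 = 0 := by
      by_contra hh; exact h.1 ((hS _).2 hh)
    have h2 : u (Γ.ends e).2 = 0 := by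
      by_contra hh; exact h.2 ((hS _).2 hh)
    apply he
    rw [h1, h2]
    ring
  have hQ0 : 0 ≤ Γ.Q u := by
    rw [hQf]
    exact Finset.sum_nonneg fun e _ => mul_nonneg (Γ.b_pos e).le (sq_nonneg _)
  set N := ∑ v ∈ S, Γ.m v * u v ^ 2 with hNdef
  have hN0 : 0 ≤ N :=
    Finset.sum_nonneg fun v _ => mul_nonneg (Γ.m_pos v).le (sq_nonneg _)
  -- co-area applied to w = u²
  have hco : α * N ≤ ∑ e ∈ F, d e * Γ.b e * |u (Γ.ends e).2 ^ 2 - u (Γ.ends e).1 ^ 2| := by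
    have happ := coarea hd X (((S.filter fun v => u v ^ 2 ≠ 0).image fun v => u v ^ 2).card)
      (fun v => u v ^ 2) S le_rfl (fun v => sq_nonneg _)
      (fun v hv => by show u v ^ 2 = 0; rw [show u v = 0 by by_contra hh; exact hv ((hS v).2 hh)]; ring)
      (fun v hv => by show u v ^ 2 = 0; rw [hX0 v hv]; ring)
    exact happ
  set R := ∑ e ∈ F, d e * Γ.b e * |u (Γ.ends e).2 ^ 2 - u (Γ.ends e).1 ^ 2| with hRdef
  have hR0 : 0 ≤ R :=
    Finset.sum_nonneg fun e _ =>
      mul_nonneg (mul_nonneg (hd e).le (Γ.b_pos e).le) (abs_nonneg _)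
  -- Cauchy-Schwarz
  set f : Γ.E → ℝ := fun e => Real.sqrt (Γ.b e) * |u (Γ.ends e).2 - u (Γ.ends e).1| with hf
  set g : Γ.E → ℝ := fun e =>
    d e * Real.sqrt (Γ.b e) * |u (Γ.ends e).2 + u (Γ.ends e).1| with hg
  have hfg : ∀ e, f e * g e = d e * Γ.b e * |u (Γ.ends e).2 ^ 2 - u (Γ.ends e).1 ^ 2| := by
    intro e
    have hb := (Γ.b_pos e).le
    have habs : |u (Γ.ends e).2 ^ 2 - u (Γ.ends e).1 ^ 2|
        = |u (Γ.ends e).2 - u (Γ.ends e).1| * |u (Γ.ends e).2 + u (Γ.ends e).1| := by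
      rw [← abs_mul]
      congr 1
      ring
    have hss : Real.sqrt (Γ.b e) * Real.sqrt (Γ.b e) = Γ.b e := Real.mul_self_sqrt hb
    show Real.sqrt (Γ.b e) * |u (Γ.ends e).2 - u (Γ.ends e).1|
        * (d e * Real.sqrt (Γ.b e) * |u (Γ.ends e).2 + u (Γ.ends e).1|) = _
    rw [habs]
    linear_combination d e * |u (Γ.ends e).2 - u (Γ.ends e).1|
      * |u (Γ.ends e).2 + u (Γ.ends e).1| * hss
  have hf2 : ∀ e, f e ^ 2 = Γ.b e * (u (Γ.ends e).2 - u (Γ.ends e).1) ^ 2 := by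
    intro e
    rw [hf]
    rw [mul_pow, sq_abs, Real.sq_sqrt (Γ.b_pos e).le]
  have hg2 : ∀ e, g e ^ 2 = d e ^ 2 * Γ.b e * (u (Γ.ends e).2 + u (Γ.ends e).1) ^ 2 := by
    intro e
    rw [hg]
    rw [mul_pow, mul_pow, sq_abs, Real.sq_sqrt (Γ.b_pos e).le]
  have hCS : R ^ 2 ≤ Γ.Q u * ∑ e ∈ F, d e ^ 2 * Γ.b e * (u (Γ.ends e).2 + u (Γ.ends e).1) ^ 2 := by
    have h1 : R = ∑ e ∈ F, f e * g e := by
      rw [hRdef]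
      exact Finset.sum_congr rfl fun e _ => (hfg e).symm
    have h2 := Finset.sum_mul_sq_le_sq_mul_sq F f g
    rw [h1]
    calc (∑ e ∈ F, f e * g e) ^ 2 ≤ (∑ e ∈ F, f e ^ 2) * ∑ e ∈ F, g e ^ 2 := h2
      _ = Γ.Q u * ∑ e ∈ F, d e ^ 2 * Γ.b e * (u (Γ.ends e).2 + u (Γ.ends e).1) ^ 2 := by
          rw [hQf]
          congr 1
          · exact Finset.sum_congr rfl fun e _ => hf2 e
          · exact Finset.sum_congr rfl fun e _ => hg2 e
  -- double counting bound  G ≤ 2 N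
  have hG : ∑ e ∈ F, d e ^ 2 * Γ.b e * (u (Γ.ends e).2 + u (Γ.ends e).1) ^ 2 ≤ 2 * N := by
    have hstep : ∀ e ∈ F, d e ^ 2 * Γ.b e * (u (Γ.ends e).2 + u (Γ.ends e).1) ^ 2
        ≤ 2 * (d e ^ 2 * Γ.b e * (u (Γ.ends e).1 ^ 2 + u (Γ.ends e).2 ^ 2)) := by
      intro e _
      have hdb : 0 ≤ d e ^ 2 * Γ.b e := mul_nonneg (sq_nonneg _) (Γ.b_pos e).le
      nlinarith [sq_nonneg (u (Γ.ends e).2 - u (Γ.ends e).1)]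
    have hsum : ∑ e ∈ F, d e ^ 2 * Γ.b e * (u (Γ.ends e).1 ^ 2 + u (Γ.ends e).2 ^ 2) ≤ N := by
      have hrw : ∀ e ∈ F, d e ^ 2 * Γ.b e * (u (Γ.ends e).1 ^ 2 + u (Γ.ends e).2 ^ 2)
          = ∑ v ∈ S, ((if (Γ.ends e).1 = v then d e ^ 2 * Γ.b e * u v ^ 2 else 0)
            + (if (Γ.ends e).2 = v then d e ^ 2 * Γ.b e * u v ^ 2 else 0)) := by
        intro e _
        rw [Finset.sum_add_distrib, Finset.sum_ite_eq, Finset.sum_ite_eq]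
        by_cases hm1 : (Γ.ends e).1 ∈ S <;> by_cases hm2 : (Γ.ends e).2 ∈ S
        · simp only [if_pos hm1, if_pos hm2]; ring
        · have : u (Γ.ends e).2 = 0 := by by_contra hh; exact hm2 ((hS _).2 hh)
          simp only [if_pos hm1, if_neg hm2, this]; ring
        · have : u (Γ.ends e).1 = 0 := by by_contra hh; exact hm1 ((hS _).2 hh)
          simp only [if_neg hm1, if_pos hm2, this]; ring
        · have h1 : u (Γ.ends e).1 = 0 := by by_contra hh; exact hm1 ((hS _).2 hh)
          have h2 : u (Γ.ends e).2 = 0 := by by_contra hh; exact hm2 ((hS _).2 hh)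
          simp only [if_neg hm1, if_neg hm2, h1, h2]; ring
      rw [Finset.sum_congr rfl hrw, Finset.sum_comm]
      have hv : ∀ v ∈ S,
          (∑ e ∈ F, ((if (Γ.ends e).1 = v then d e ^ 2 * Γ.b e * u v ^ 2 else 0)
            + (if (Γ.ends e).2 = v then d e ^ 2 * Γ.b e * u v ^ 2 else 0)))
          ≤ Γ.m v * u v ^ 2 := by
        intro v _
        rw [Finset.sum_add_distrib, ← Finset.sum_filter, ← Finset.sum_filter]
        have hdisj : Disjoint (F.filter fun e => (Γ.ends e).1 = v)
            (F.filter fun e => (Γ.ends e).2 = v) := by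
          rw [Finset.disjoint_left]
          intro e h1 h2
          exact Γ.no_loops e (((Finset.mem_filter.1 h1).2).trans
            ((Finset.mem_filter.1 h2).2).symm)
        rw [← Finset.sum_union hdisj]
        have hsub : (F.filter fun e => (Γ.ends e).1 = v) ∪
            (F.filter fun e => (Γ.ends e).2 = v) ⊆ (Γ.locfin v).toFinset := by
          intro e he
          rw [Set.Finite.mem_toFinset, Set.mem_setOf_eq]
          rcases Finset.mem_union.1 he with h | h
          · exact Or.inl (Finset.mem_filter.1 h).2
          · exact Or.inr (Finset.mem_filter.1 h).2
        calc ∑ e ∈ _, d e ^ 2 * Γ.b e * u v ^ 2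
            ≤ ∑ e ∈ (Γ.locfin v).toFinset, d e ^ 2 * Γ.b e * u v ^ 2 :=
              Finset.sum_le_sum_of_subset_of_nonneg hsub fun e _ _ =>
                mul_nonneg (mul_nonneg (sq_nonneg _) (Γ.b_pos e).le) (sq_nonneg _)
          _ = (∑ e ∈ (Γ.locfin v).toFinset, d e ^ 2 * Γ.b e) * u v ^ 2 := by
              rw [Finset.sum_mul]
          _ ≤ Γ.m v * u v ^ 2 :=
              mul_le_mul_of_nonneg_right (hintr v) (sq_nonneg _)
      exact Finset.sum_le_sum hv
    calc ∑ e ∈ F, d e ^ 2 * Γ.b e * (u (Γ.ends e).2 + u (Γ.ends e).1) ^ 2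
        ≤ ∑ e ∈ F, 2 * (d e ^ 2 * Γ.b e * (u (Γ.ends e).1 ^ 2 + u (Γ.ends e).2 ^ 2)) :=
          Finset.sum_le_sum hstep
      _ = 2 * ∑ e ∈ F, d e ^ 2 * Γ.b e * (u (Γ.ends e).1 ^ 2 + u (Γ.ends e).2 ^ 2) := by
          rw [Finset.mul_sum]
      _ ≤ 2 * N := by linarith
  -- combine
  rw [hN]
  rcases eq_or_lt_of_le hN0 with h | hNpos
  · rw [← h]
    simpa using (by linarith : (0:ℝ) ≤ 2 * Γ.Q u)
  · have h1 : (α * N) ^ 2 ≤ R ^ 2 := by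
      have := mul_nonneg hα0 hN0
      nlinarith
    have h2 : R ^ 2 ≤ Γ.Q u * (2 * N) :=
      le_trans hCS (mul_le_mul_of_nonneg_left hG hQ0)
    have h3 : α ^ 2 * N * N ≤ 2 * Γ.Q u * N := by nlinarith
    exact le_of_mul_le_mul_right h3 hNpos

end Part1
lemma normSqD_pos {Γ : WeightedGraph} {u : Γ.V → ℝ} (hu : (Function.support u).Finite)
    (hne : u ≠ 0) : 0 < Γ.normSqD u := by
  obtain ⟨v, hv⟩ := Function.ne_iff.1 hne
  rw [Pi.zero_apply] at hv
  have hN : Γ.normSqD u = ∑ w ∈ hu.toFinset, Γ.m w * u w ^ 2 := by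
    apply finsum_eq_sum_of_support_subset
    intro w hw
    rw [Function.mem_support] at hw
    rw [Finset.mem_coe, Set.Finite.mem_toFinset, Function.mem_support]
    intro h
    apply hw
    rw [h]
    ring
  rw [hN]
  have hvS : v ∈ hu.toFinset := by
    rw [Set.Finite.mem_toFinset, Function.mem_support]
    exact hv
  refine lt_of_lt_of_le ?_ (Finset.single_le_sum
    (fun w _ => mul_nonneg (Γ.m_pos w).le (sq_nonneg _)) hvS)
  exact mul_pos (Γ.m_pos v)
    (lt_of_le_of_ne (sq_nonneg _) (Ne.symm (pow_ne_zero 2 hv)))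

/-- **Theorem A.1 (essential-spectrum estimate).** Let `(V, m, b)` be a weighted graph
and `d` an intrinsic edge weight. For every finite `X ⊆ V` and every finitely
supported `u` vanishing on `X`, `α_d(V∖X)²·Σ_v m(v) u(v)² ≤ 2·Q(u)`; in particular
`λ₀^ess(h) ≥ α_ess²/2` where `α_ess = sup_X α_d(V∖X)`. -/
theorem discrete_cheeger_inequality_ess (Γ : WeightedGraph) (d : Γ.E → ℝ)
    (hd : ∀ e, 0 < d e) (hintr : Γ.Intrinsic d) :
    (∀ X : Finset Γ.V, ∀ u : Γ.V → ℝ, (Function.support u).Finite →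
      (∀ v ∈ X, u v = 0) →
      Γ.alphaD d (↑X : Set Γ.V)ᶜ ^ 2 * Γ.normSqD u ≤ 2 * Γ.Q u) ∧
    Γ.alphaDEssEnn d ^ 2 / 2 ≤ Γ.lambda0EssEnn := by
  have part1 : ∀ X : Finset Γ.V, ∀ u : Γ.V → ℝ, (Function.support u).Finite →
      (∀ v ∈ X, u v = 0) →
      Γ.alphaD d (↑X : Set Γ.V)ᶜ ^ 2 * Γ.normSqD u ≤ 2 * Γ.Q u :=
    fun X u hu hX0 => cheeger_part1 hd hintr X u hu hX0
  refine ⟨part1, ?_⟩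
  rw [WeightedGraph.alphaDEssEnn, WeightedGraph.lambda0EssEnn]
  set a : Finset Γ.V → ℝ := fun X => Γ.alphaD d (↑X : Set Γ.V)ᶜ with hadef
  rw [sq, ENNReal.iSup_mul, ENNReal.iSup_div]
  refine iSup_le fun X1 => ?_
  rw [ENNReal.mul_iSup, ENNReal.iSup_div]
  refine iSup_le fun X2 => ?_
  set Z := X1 ∪ X2 with hZ
  have hmono1 : ENNReal.ofReal (a X1) ≤ ENNReal.ofReal (a Z) :=
    ENNReal.ofReal_le_ofReal (alphaD_mono hd Finset.subset_union_left)
  have hmono2 : ENNReal.ofReal (a X2) ≤ ENNReal.ofReal (a Z) :=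
    ENNReal.ofReal_le_ofReal (alphaD_mono hd Finset.subset_union_right)
  have hZ0 : 0 ≤ a Z := alphaD_nonneg hd _
  have step1 : ENNReal.ofReal (a X1) * ENNReal.ofReal (a X2) / 2
      ≤ ENNReal.ofReal (a Z * a Z / 2) := by
    rw [ENNReal.ofReal_div_of_pos (by norm_num : (0:ℝ) < 2), ENNReal.ofReal_mul hZ0]
    have h2 : ENNReal.ofReal (2:ℝ) = 2 := by
      rw [show ((2:ℝ)) = ((2:ℕ):ℝ) by norm_num, ENNReal.ofReal_natCast]
      norm_num
    rw [h2]
    exact ENNReal.div_le_div_right (mul_le_mul' hmono1 hmono2) 2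
  refine le_trans step1 (le_trans ?_ (le_iSup _ Z))
  refine le_iInf fun u => le_iInf fun hcond => ?_
  obtain ⟨hufin, hune, huZ⟩ := hcond
  have hNpos : 0 < Γ.normSqD u := normSqD_pos hufin hune
  apply ENNReal.ofReal_le_ofReal
  have h1 := part1 Z u hufin huZ
  rw [le_div_iff₀ hNpos]
  calc a Z * a Z / 2 * Γ.normSqD u = (a Z ^ 2 * Γ.normSqD u) / 2 := by ring
    _ ≤ 2 * Γ.Q u / 2 := by linarith
    _ = Γ.Q u := by ring
end
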